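/- arXiv:1705.10200 — 3 statements merged into one kernel-verified Lean document; each statement's English description precedes it below -/
import Mathlib

section
/- Let l divide n, 1 ≤ p,q ≤ n/l, and 1 ≤ r ≤ l−1. Then in U(Q(n))/I_χ: π(e_{l(p−1)+m, l(q−1)+1}^{(r)}) = δ_{p,q} if m = r+1, π(e_{l(p−1)+m, l(q−1)+1}^{(r)}) = 0 if r+2 ≤ m ≤ l, and π(f_{l(p−1)+m, l(q−1)+1}^{(r)}) = 0 if r+1 ≤ m ≤ l. -/
noncomputable section
open scoped Classical

/-! # The universal enveloping superalgebra `U(Q(n))` of the queer Lie superalgebra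

`U(Q(n))` is presented by even generators `e i j` and odd generators `f i j`
(`1 ≤ i,j ≤ n`) subject to the relations
`[e i j, e k l] = δ_{jk} e i l - δ_{li} e k j`,
`[e i j, f k l] = δ_{jk} f i l - δ_{li} f k j`,
`f i j * f k l + f k l * f i j = δ_{jk} e i l + δ_{li} e k j`. -/

/-- Generators of `U(Q(n))`: `E i j` (even) and `F i j` (odd). -/
inductive QGen (n : ℕ) : Type
  | E : Fin n → Fin n → QGen n
  | F : Fin n → Fin n → QGen n

/-- Kronecker delta. -/
def kd {n : ℕ} (i j : Fin n) : ℂ := if i = j then 1 else 0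

/-- The defining relations of `U(Q(n))`. -/
inductive QRel (n : ℕ) : FreeAlgebra ℂ (QGen n) → FreeAlgebra ℂ (QGen n) → Prop
  | ee (i j k l : Fin n) : QRel n
      (FreeAlgebra.ι ℂ (QGen.E i j) * FreeAlgebra.ι ℂ (QGen.E k l) -
        FreeAlgebra.ι ℂ (QGen.E k l) * FreeAlgebra.ι ℂ (QGen.E i j))
      (kd j k • FreeAlgebra.ι ℂ (QGen.E i l) - kd l i • FreeAlgebra.ι ℂ (QGen.E k j))
  | ef (i j k l : Fin n) : QRel n
      (FreeAlgebra.ι ℂ (QGen.E i j) * FreeAlgebra.ι ℂ (QGen.F k l) -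
        FreeAlgebra.ι ℂ (QGen.F k l) * FreeAlgebra.ι ℂ (QGen.E i j))
      (kd j k • FreeAlgebra.ι ℂ (QGen.F i l) - kd l i • FreeAlgebra.ι ℂ (QGen.F k j))
  | ff (i j k l : Fin n) : QRel n
      (FreeAlgebra.ι ℂ (QGen.F i j) * FreeAlgebra.ι ℂ (QGen.F k l) +
        FreeAlgebra.ι ℂ (QGen.F k l) * FreeAlgebra.ι ℂ (QGen.F i j))
      (kd j k • FreeAlgebra.ι ℂ (QGen.E i l) + kd l i • FreeAlgebra.ι ℂ (QGen.E k j))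

/-- The universal enveloping superalgebra `U(Q(n))`. -/
abbrev UQ (n : ℕ) := RingQuot (QRel n)

/-- The generator `e i j` of `U(Q(n))`. -/
def Ue {n : ℕ} (i j : Fin n) : UQ n :=
  RingQuot.mkAlgHom ℂ (QRel n) (FreeAlgebra.ι ℂ (QGen.E i j))

/-- The generator `f i j` of `U(Q(n))`. -/
def Uf {n : ℕ} (i j : Fin n) : UQ n :=
  RingQuot.mkAlgHom ℂ (QRel n) (FreeAlgebra.ι ℂ (QGen.F i j))

/-- Sergeev's elements `e_{ij}^{(m)}` and `f_{ij}^{(m)}` of `U(Q(n))`, defined recursively by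
`e^{(0)} = δ`, `f^{(0)} = 0`,
`e_{ij}^{(m)} = Σ_k e_{ik} e_{kj}^{(m-1)} + (-1)^{m+1} Σ_k f_{ik} f_{kj}^{(m-1)}`,
`f_{ij}^{(m)} = Σ_k e_{ik} f_{kj}^{(m-1)} + (-1)^{m+1} Σ_k f_{ik} e_{kj}^{(m-1)}`. -/
def efU (n : ℕ) : ℕ → (Fin n → Fin n → UQ n) × (Fin n → Fin n → UQ n)
  | 0 => (fun i j => algebraMap ℂ (UQ n) (kd i j), fun _ _ => 0)
  | m + 1 =>
      (fun i j => (∑ k, Ue i k * (efU n m).1 k j) +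
        (-1 : ℂ) ^ m • ∑ k, Uf i k * (efU n m).2 k j,
       fun i j => (∑ k, Ue i k * (efU n m).2 k j) +
        (-1 : ℂ) ^ m • ∑ k, Uf i k * (efU n m).1 k j)

/-- `e_{ij}^{(m)}`. -/
def eU {n : ℕ} (m : ℕ) (i j : Fin n) : UQ n := (efU n m).1 i j
/-- `f_{ij}^{(m)}`. -/
def fU {n : ℕ} (m : ℕ) (i j : Fin n) : UQ n := (efU n m).2 i j

/-- For `l ∣ n`, the index `l(p-1)+i` of `{1,…,n}` (0-based: block `p`, position `i`). -/
def bidx {n l : ℕ} (h : l ∣ n) (p : Fin (n / l)) (i : Fin l) : Fin n :=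
  ⟨l * p.val + i.val, by
    have h1 : i.val < l := i.isLt
    have h2 : p.val + 1 ≤ n / l := p.isLt
    have h3 : l * (p.val + 1) ≤ l * (n / l) := Nat.mul_le_mul_left l h2
    have h4 : n / l * l ≤ n := Nat.div_mul_le_self n l
    have h5 : l * (p.val + 1) = l * p.val + l := Nat.mul_succ l p.val
    have h6 : l * (n / l) = n / l * l := Nat.mul_comm l (n / l)
    omega⟩
set_option linter.unusedVariables false

/-! # The character `χ`, the left ideal `I_χ` and the finite W-algebra data

Here `l ∣ n` and `χ` corresponds to the even nilpotent element of `Q(n)` all of whose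
Jordan blocks have size `l`.  The subalgebra `m = ⊕_{j<0} g_j` is spanned by the
elements `e_{l(p-1)+i+k, l(q-1)+i}` and `f_{l(p-1)+i+k, l(q-1)+i}` (`k ≥ 1`), and
`χ(e_{l(p-1)+i+1, l(q-1)+i}) = δ_{pq}` and `χ = 0` on the other basis elements. -/

/-- The set of elements `a - χ(a)` for `a` ranging over the standard basis of `m`;
(rows/columns written 0-based: `a` is the position of the row inside its block `p`,
`b` the position of the column inside its block `q`, with `b < a`). -/
def mSet (n l : ℕ) (h : l ∣ n) : Set (UQ n) :=
  { x : UQ n | ∃ (p q : Fin (n / l)) (a b : Fin l), b.val < a.val ∧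
      (x = Ue (bidx h p a) (bidx h q b) -
            algebraMap ℂ (UQ n) (if a.val = b.val + 1 ∧ p = q then 1 else 0) ∨
       x = Uf (bidx h p a) (bidx h q b)) }

/-- The left ideal `I_χ` of `U(Q(n))` generated by the `a - χ(a)`, `a ∈ m`. -/
def Ichi (n l : ℕ) (h : l ∣ n) : Submodule (UQ n) (UQ n) :=
  Submodule.span (UQ n) (mSet n l h)

/-- The quotient `U(Q(n))/I_χ` (as a `ℂ`-vector space). -/
abbrev Wq (n l : ℕ) (h : l ∣ n) := UQ n ⧸ (Ichi n l h).restrictScalars ℂ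

/-- The quotient map `π : U(Q(n)) → U(Q(n))/I_χ`. -/
def piq (n l : ℕ) (h : l ∣ n) : UQ n →ₗ[ℂ] Wq n l h :=
  ((Ichi n l h).restrictScalars ℂ).mkQ

/-- `y` super-commutes with `m` into `I_χ`:  `[a, y] ∈ I_χ` for every `a` in the standard
basis of `m`.  Here the super-commutator of the odd element `f` with (the possibly
non-homogeneous) `y` is `f * y - σ(y) * f`, where `σ` is the parity involution of
`U(Q(n))` (the algebra automorphism fixing the `e`'s and negating the `f`'s). -/
def Wcond {n l : ℕ} (h : l ∣ n) (σ : UQ n →ₐ[ℂ] UQ n) (y : UQ n) : Prop :=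
  ∀ (p q : Fin (n / l)) (a b : Fin l), b.val < a.val →
    (Ue (bidx h p a) (bidx h q b) * y - y * Ue (bidx h p a) (bidx h q b) ∈ Ichi n l h) ∧
    (Uf (bidx h p a) (bidx h q b) * y - σ y * Uf (bidx h p a) (bidx h q b) ∈ Ichi n l h)

/-- The finite W-algebra `W_χ = {π(y) | [a, y] ∈ I_χ for all a ∈ m}`, as a subset of
`U(Q(n))/I_χ`.  (Its product is `π(y₁)·π(y₂) = π(y₁y₂)`.) -/
def WchiSet (n l : ℕ) (h : l ∣ n) (σ : UQ n →ₐ[ℂ] UQ n) : Set (Wq n l h) :=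
  { w : Wq n l h | ∃ y : UQ n, Wcond h σ y ∧ piq n l h y = w }

/-- The standard basis elements of the parabolic subalgebra `p = ⊕_{j≥0} g_j`. -/
def pSet (n l : ℕ) (h : l ∣ n) : Set (UQ n) :=
  { x : UQ n | ∃ (p q : Fin (n / l)) (a b : Fin l), a.val ≤ b.val ∧
      (x = Ue (bidx h p a) (bidx h q b) ∨ x = Uf (bidx h p a) (bidx h q b)) }

/-- The standard basis elements of the nilradical `n = ⊕_{j>0} g_j` of `p`. -/
def nSet (n l : ℕ) (h : l ∣ n) : Set (UQ n) :=
  { x : UQ n | ∃ (p q : Fin (n / l)) (a b : Fin l), a.val < b.val ∧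
      (x = Ue (bidx h p a) (bidx h q b) ∨ x = Uf (bidx h p a) (bidx h q b)) }

/-- The kernel of the Harish-Chandra projection `ϑ : U(p) → U(g₀)`, realized inside
`U(Q(n))`: the `ℂ`-span of `U(p)·n`.  (By the PBW theorem, `U(g) = U(p) ⊕ I_χ` and
`U(p) = U(g₀) ⊕ U(p)n`, so for `y ∈ U(g)`, `ϑ(pr(y)) = t` iff
`y - t ∈ I_χ + U(p)n`.) -/
def Lspan (n l : ℕ) (h : l ∣ n) : Submodule ℂ (UQ n) :=
  Submodule.span ℂ
    { x : UQ n | ∃ u ∈ Algebra.adjoin ℂ (pSet n l h), ∃ g ∈ nSet n l h, x = u * g }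

/-- A descriptor of a generator of `U(p)`:  `(b, p, q, a, c)` is
`e_{l(p-1)+(a+1), l(q-1)+(c+1)}` if `b = false` and `f_{…}` if `b = true`
(required: `a ≤ c`). -/
def pgElem {n l : ℕ} (h : l ∣ n) :
    Bool × Fin (n / l) × Fin (n / l) × Fin l × Fin l → UQ n
  | (b, p, q, a, c) => (if b then Uf else Ue) (bidx h p a) (bidx h q c)

/-- Kazhdan degree `2k+2` of a `p`-generator of block offset `k = c - a`. -/
def pgDeg {l m : ℕ} (d : Bool × Fin m × Fin m × Fin l × Fin l) : ℕ :=
  2 * (d.2.2.2.2.val - d.2.2.2.1.val) + 2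

/-- Weight `2k` of a `p`-generator of block offset `k = c - a`. -/
def pgWt {l m : ℕ} (d : Bool × Fin m × Fin m × Fin l × Fin l) : ℕ :=
  2 * (d.2.2.2.2.val - d.2.2.2.1.val)

/-- Monomials in the generators of `U(p)` which are "lower" than bidegree
(Kazhdan degree `D`, weight `W`): either of Kazhdan degree `< D`, or of Kazhdan
degree `≤ D` and weight `< W`. -/
def LowSet (n l : ℕ) (h : l ∣ n) (D W : ℕ) : Set (UQ n) :=
  { x : UQ n | ∃ L : List (Bool × Fin (n / l) × Fin (n / l) × Fin l × Fin l),
      (∀ d ∈ L, d.2.2.2.1.val ≤ d.2.2.2.2.val) ∧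
      x = (L.map (pgElem h)).prod ∧
      ((L.map pgDeg).sum < D ∨ ((L.map pgDeg).sum ≤ D ∧ (L.map pgWt).sum < W)) }

/-- The span of the "lower" monomials. -/
def LowSpan (n l : ℕ) (h : l ∣ n) (D W : ℕ) : Submodule ℂ (UQ n) :=
  Submodule.span ℂ (LowSet n l h D W)

/-! # The super tensor power `U(Q(m))^{⊗l}`

Modeled as the superalgebra with generators `x^i_{pq} = 1^{⊗(l-i)} ⊗ e_{pq} ⊗ 1^{⊗(i-1)}`
(even) and `ξ^i_{pq} = 1^{⊗(l-i)} ⊗ f_{pq} ⊗ 1^{⊗(i-1)}` (odd), subject to the `U(Q(m))`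
relations in each tensor slot and to (super-)commutation between different slots. -/

/-- Generators of `U(Q(m))^{⊗l}`: `X i p q` is `x^i_{pq}` and `Xi i p q` is `ξ^i_{pq}`
(`i : Fin l` is the 0-based tensor slot, counted from the right). -/
inductive TGen (m l : ℕ) : Type
  | X : Fin l → Fin m → Fin m → TGen m l
  | Xi : Fin l → Fin m → Fin m → TGen m l

/-- Kronecker delta on slots. -/
def kdl {l : ℕ} (i j : Fin l) : ℂ := if i = j then 1 else 0

/-- The defining relations of `U(Q(m))^{⊗l}`. -/
inductive TRel (m l : ℕ) : FreeAlgebra ℂ (TGen m l) → FreeAlgebra ℂ (TGen m l) → Prop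
  | xx (i i' : Fin l) (p q r s : Fin m) : TRel m l
      (FreeAlgebra.ι ℂ (TGen.X i p q) * FreeAlgebra.ι ℂ (TGen.X i' r s) -
        FreeAlgebra.ι ℂ (TGen.X i' r s) * FreeAlgebra.ι ℂ (TGen.X i p q))
      ((kdl i i' * kd q r) • FreeAlgebra.ι ℂ (TGen.X i p s) -
        (kdl i i' * kd s p) • FreeAlgebra.ι ℂ (TGen.X i' r q))
  | xxi (i i' : Fin l) (p q r s : Fin m) : TRel m l
      (FreeAlgebra.ι ℂ (TGen.X i p q) * FreeAlgebra.ι ℂ (TGen.Xi i' r s) -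
        FreeAlgebra.ι ℂ (TGen.Xi i' r s) * FreeAlgebra.ι ℂ (TGen.X i p q))
      ((kdl i i' * kd q r) • FreeAlgebra.ι ℂ (TGen.Xi i p s) -
        (kdl i i' * kd s p) • FreeAlgebra.ι ℂ (TGen.Xi i' r q))
  | xixi (i i' : Fin l) (p q r s : Fin m) : TRel m l
      (FreeAlgebra.ι ℂ (TGen.Xi i p q) * FreeAlgebra.ι ℂ (TGen.Xi i' r s) +
        FreeAlgebra.ι ℂ (TGen.Xi i' r s) * FreeAlgebra.ι ℂ (TGen.Xi i p q))
      ((kdl i i' * kd q r) • FreeAlgebra.ι ℂ (TGen.X i p s) +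
        (kdl i i' * kd s p) • FreeAlgebra.ι ℂ (TGen.X i' r q))

/-- The superalgebra `U(Q(m))^{⊗l}`. -/
abbrev TQ (m l : ℕ) := RingQuot (TRel m l)

/-- `x^i_{pq} := 1^{⊗(l-i)} ⊗ e_{pq} ⊗ 1^{⊗(i-1)} ∈ U(Q(m))^{⊗l}`. -/
def xT {m l : ℕ} (i : Fin l) (p q : Fin m) : TQ m l :=
  RingQuot.mkAlgHom ℂ (TRel m l) (FreeAlgebra.ι ℂ (TGen.X i p q))

/-- `ξ^i_{pq} := 1^{⊗(l-i)} ⊗ f_{pq} ⊗ 1^{⊗(i-1)} ∈ U(Q(m))^{⊗l}`. -/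
def xiT {m l : ℕ} (i : Fin l) (p q : Fin m) : TQ m l :=
  RingQuot.mkAlgHom ℂ (TRel m l) (FreeAlgebra.ι ℂ (TGen.Xi i p q))

/-! # The super-Yangian `Y(Q(n))` -/

/-- The index set `{±1, …, ±n}`:  `(false, a)` is the positive index `a` (even),
`(true, a)` is the negative index `-a` (odd). -/
abbrev QIdx (n : ℕ) := Bool × Fin n

/-- Negation `i ↦ -i` on indices. -/
def qneg {n : ℕ} (i : QIdx n) : QIdx n := (!i.1, i.2)

/-- The parity `p(i)`: `0` for positive `i`, `1` for negative `i`. -/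
def qpar {n : ℕ} (i : QIdx n) : ℕ := if i.1 then 1 else 0

/-- Kronecker delta on `{±1, …, ±n}`. -/
def kdq {n : ℕ} (i j : QIdx n) : ℂ := if i = j then 1 else 0

/-- Generators of `Y(Q(n))`: `T m i j` encodes `T^{(m+1)}_{i,j}`. -/
inductive YGen (n : ℕ) : Type
  | T : ℕ → QIdx n → QIdx n → YGen n

/-- `T^{(m)}_{i,j}` in the free algebra, with `T^{(0)}_{i,j} = δ_{ij}`. -/
def Tf {n : ℕ} : ℕ → QIdx n → QIdx n → FreeAlgebra ℂ (YGen n)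
  | 0, i, j => algebraMap ℂ _ (kdq i j)
  | m + 1, i, j => FreeAlgebra.ι ℂ (YGen.T m i j)

/-- The super-commutator `[T^{(a)}_{i,j}, T^{(b)}_{k,l}]` in the free algebra. -/
def ybr {n : ℕ} (a : ℕ) (i j : QIdx n) (b : ℕ) (k l : QIdx n) :
    FreeAlgebra ℂ (YGen n) :=
  Tf a i j * Tf b k l -
    ((-1 : ℂ) ^ ((qpar i + qpar j) * (qpar k + qpar l))) • (Tf b k l * Tf a i j)

/-- The defining relations of the super-Yangian `Y(Q(n))`: for `M, R ≥ 1`,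
`(-1)^{p(i)p(k)+p(i)p(l)+p(k)p(l)} ([T^{(M+1)}_{ij}, T^{(R-1)}_{kl}] - [T^{(M-1)}_{ij}, T^{(R+1)}_{kl}])
 = T^{(M)}_{kj}T^{(R-1)}_{il} + T^{(M-1)}_{kj}T^{(R)}_{il} - T^{(R-1)}_{kj}T^{(M)}_{il}
   - T^{(R)}_{kj}T^{(M-1)}_{il}
   + (-1)^{p(k)+p(l)} (-T^{(M)}_{-k,j}T^{(R-1)}_{-i,l} + T^{(M-1)}_{-k,j}T^{(R)}_{-i,l}
       + T^{(R-1)}_{k,-j}T^{(M)}_{i,-l} - T^{(R)}_{k,-j}T^{(M-1)}_{i,-l})`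
(here `M = m+1`, `R = r+1`), together with `T^{(m)}_{-i,-j} = (-1)^m T^{(m)}_{i,j}`. -/
inductive YRel (n : ℕ) : FreeAlgebra ℂ (YGen n) → FreeAlgebra ℂ (YGen n) → Prop
  | quad (m r : ℕ) (i j k l : QIdx n) : YRel n
      (((-1 : ℂ) ^ (qpar i * qpar k + qpar i * qpar l + qpar k * qpar l)) •
        (ybr (m + 2) i j r k l - ybr m i j (r + 2) k l))
      (Tf (m + 1) k j * Tf r i l + Tf m k j * Tf (r + 1) i l -
        Tf r k j * Tf (m + 1) i l - Tf (r + 1) k j * Tf m i l +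
        ((-1 : ℂ) ^ (qpar k + qpar l)) •
          (-(Tf (m + 1) (qneg k) j * Tf r (qneg i) l) +
            Tf m (qneg k) j * Tf (r + 1) (qneg i) l +
            Tf r k (qneg j) * Tf (m + 1) i (qneg l) -
            Tf (r + 1) k (qneg j) * Tf m i (qneg l)))
  | par (m : ℕ) (i j : QIdx n) : YRel n
      (Tf (m + 1) (qneg i) (qneg j)) (((-1 : ℂ) ^ (m + 1)) • Tf (m + 1) i j)

/-- The super-Yangian `Y(Q(n))`. -/
abbrev YQ (n : ℕ) := RingQuot (YRel n)

/-- The generator `T^{(m)}_{i,j}` of `Y(Q(n))` (with `T^{(0)}_{i,j} = δ_{ij}`). -/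
def TY {n : ℕ} (m : ℕ) (i j : QIdx n) : YQ n :=
  RingQuot.mkAlgHom ℂ (YRel n) (Tf m i j)

/-! # Values of the homomorphisms `U`, `ev`, `ēv` on the generators of `Y(Q(n))`,
and the explicit sums appearing in the main theorems. -/

/-- The value of the homomorphism `U : Y(Q(n)) → U(Q(n))` on the generator
`T^{(r)}_{i,j}`:  `U(T^{(r)}_{i,j}) = (-1)^r e^{(r)}_{j,i}`,
`U(T^{(r)}_{-i,j}) = (-1)^r f^{(r)}_{j,i}` for `i, j > 0`, and the values on the other
generators are forced by `T^{(r)}_{-i,-j} = (-1)^r T^{(r)}_{i,j}`. -/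
def Uval {n : ℕ} (r : ℕ) (i j : QIdx n) : UQ n :=
  (if j.1 then (-1 : ℂ) ^ r else 1) •
    ((-1 : ℂ) ^ r • (if xor i.1 j.1 then fU r j.2 i.2 else eU r j.2 i.2))

/-- The value of the evaluation homomorphism `ev : Y(Q(n)) → U(Q(n))` on `T^{(r)}_{i,j}`:
`ev(T^{(1)}_{i,j}) = -e_{j,i}`, `ev(T^{(1)}_{-i,j}) = -f_{j,i}` for `i, j > 0`,
`ev(T^{(0)}_{i,j}) = δ_{ij}` and `ev(T^{(r)}_{i,j}) = 0` for `r > 1` (with the values on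
the remaining generators forced by `T^{(r)}_{-i,-j} = (-1)^r T^{(r)}_{i,j}`). -/
def evval {n : ℕ} (r : ℕ) (i j : QIdx n) : UQ n :=
  (if j.1 then (-1 : ℂ) ^ r else 1) •
    (match r with
      | 0 => if xor i.1 j.1 then 0 else algebraMap ℂ (UQ n) (kd i.2 j.2)
      | 1 => -(if xor i.1 j.1 then Uf j.2 i.2 else Ue j.2 i.2)
      | _ + 2 => 0)

/-- The value of `ēv = α ∘ ev : Y(Q(n)) → U(Q(n))` on `T^{(r)}_{i,j}`, where `α` is the
principal anti-automorphism of `U(Q(n))`:  `ēv(T^{(1)}_{i,j}) = e_{j,i}`,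
`ēv(T^{(1)}_{-i,j}) = f_{j,i}` for `i, j > 0`, `ēv(T^{(0)}_{i,j}) = δ_{ij}`,
`ēv(T^{(r)}_{i,j}) = 0` for `r > 1`. -/
def bevval {n : ℕ} (r : ℕ) (i j : QIdx n) : UQ n :=
  (if j.1 then (-1 : ℂ) ^ r else 1) •
    (match r with
      | 0 => if xor i.1 j.1 then 0 else algebraMap ℂ (UQ n) (kd i.2 j.2)
      | 1 => (if xor i.1 j.1 then Uf j.2 i.2 else Ue j.2 i.2)
      | _ + 2 => 0)

/-- The sum `Σ_{p_1,…,p_{r-1}} Σ_{l ≥ i_1 ≥ i_2 ≥ … ≥ i_r ≥ 1}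
Π_{a=1}^r (x^{i_a}_{p_{a-1},p_a} + (-1)^{r-a} ξ^{i_a}_{p_{a-1},p_a})`
(with `p_0 = p`, `p_r = q`), an element of `U(Q(m))^{⊗l}`. -/
def chainProdDec (m l : ℕ) (r : ℕ) (p q : Fin m) : TQ m l :=
  ∑ c : Fin (r + 1) → Fin m, ∑ iv : Fin r → Fin l,
    (if c 0 = p ∧ c (Fin.last r) = q ∧ (∀ a b : Fin r, a ≤ b → iv b ≤ iv a)
      then (1 : ℂ) else 0) •
      (List.ofFn fun a : Fin r =>
        xT (iv a) (c a.castSucc) (c a.succ) +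
          ((-1 : ℂ) ^ (r - 1 - a.val)) • xiT (iv a) (c a.castSucc) (c a.succ)).prod

/-- The sum `Σ_{p_1,…,p_{r-1}} Σ_{1 ≤ i_1 < i_2 < … < i_r ≤ l}
Π_{a=1}^r (x^{i_a}_{p_{a-1},p_a} + (-1)^{r-a} ξ^{i_a}_{p_{a-1},p_a})`
(with `p_0 = p`, `p_r = q`), an element of `U(Q(m))^{⊗l}`. -/
def chainProdInc (m l : ℕ) (r : ℕ) (p q : Fin m) : TQ m l :=
  ∑ c : Fin (r + 1) → Fin m, ∑ iv : Fin r → Fin l,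
    (if c 0 = p ∧ c (Fin.last r) = q ∧ (∀ a b : Fin r, a < b → iv a < iv b)
      then (1 : ℂ) else 0) •
      (List.ofFn fun a : Fin r =>
        xT (iv a) (c a.castSucc) (c a.succ) +
          ((-1 : ℂ) ^ (r - 1 - a.val)) • xiT (iv a) (c a.castSucc) (c a.succ)).prod

/-- The elements `z^{(r)}_{±q,p}` of `U(Q(m))^{⊗l}`:  the even (`sgn = false`,
giving `z^{(r)}_{q,p}`) resp. odd (`sgn = true`, giving `z^{(r)}_{-q,p}`) component of
`chainProdDec`, computed using the parity involution `σT` of `U(Q(m))^{⊗l}`;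
`z^{(0)}_{q,p} = δ_{qp}`, `z^{(0)}_{-q,p} = 0`. -/
def zDec {m l : ℕ} (σT : TQ m l →ₐ[ℂ] TQ m l) :
    ℕ → Bool → Fin m → Fin m → TQ m l
  | 0, sgn, q, p => if sgn then 0 else algebraMap ℂ (TQ m l) (kd q p)
  | r + 1, sgn, q, p =>
      (2⁻¹ : ℂ) • (chainProdDec m l (r + 1) p q +
        (if sgn then (-1 : ℂ) else 1) • σT (chainProdDec m l (r + 1) p q))

/-- The elements `z̃^{(r)}_{±q,p}` of `U(Q(m))^{⊗l}` (as `zDec`, with increasing chains). -/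
def zInc {m l : ℕ} (σT : TQ m l →ₐ[ℂ] TQ m l) :
    ℕ → Bool → Fin m → Fin m → TQ m l
  | 0, sgn, q, p => if sgn then 0 else algebraMap ℂ (TQ m l) (kd q p)
  | r + 1, sgn, q, p =>
      (2⁻¹ : ℂ) • (chainProdInc m l (r + 1) p q +
        (if sgn then (-1 : ℂ) else 1) • σT (chainProdInc m l (r + 1) p q))

/-- The explicit formula for the antipode value `S(T^{(r)}_{i,j})` (`r ≥ 1`):
`S(T^{(r)}_{i,j}) = Σ_{m=1}^{r} (-1)^m Σ_{i_1,…,i_{m-1}} Σ_{r_1+⋯+r_m=r, r_a>0}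
(-1)^{ν(i,i_1,…,i_{m-1},j)} T^{(r_1)}_{i,i_1} ⋯ T^{(r_m)}_{i_{m-1},j}` where
`ν(i_0,…,i_m) = Σ_{0≤k<s≤m-1} (p(i_k)+p(i_{k+1}))(p(i_s)+p(i_{s+1}))`. -/
def STval {n : ℕ} (r : ℕ) (i j : QIdx n) : YQ n :=
  ∑ m : Fin r,
    ((-1 : ℂ) ^ (m.val + 1)) •
      ∑ ch : Fin (m.val + 2) → QIdx n, ∑ c : Fin (m.val + 1) → Fin (r + 1),
        (if ch 0 = i ∧ ch (Fin.last (m.val + 1)) = j ∧ (∀ a, 1 ≤ (c a).val) ∧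
              (∑ a, (c a).val) = r
          then ((-1 : ℂ) ^ (∑ a : Fin (m.val + 1), ∑ b : Fin (m.val + 1),
              if a < b then
                (qpar (ch a.castSucc) + qpar (ch a.succ)) *
                  (qpar (ch b.castSucc) + qpar (ch b.succ))
              else 0))
          else 0) •
        (List.ofFn fun a : Fin (m.val + 1) =>
          TY (c a).val (ch a.castSucc) (ch a.succ)).prod

/-! By induction on `r`: writing `x = (p, a)`, `y = (q, b)` for the row `a` of block `p` and
the row `b` of block `q`, one has `e^{(r)}_{x,y} ≡ δ_{pq} δ_{a,b+r}` and `f^{(r)}_{x,y} ≡ 0`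
modulo `I_χ` whenever `a ≥ b + r`. In the recursion
`e^{(r+1)}_{x,y} = Σ_k e_{x,k} e^{(r)}_{k,y} ± Σ_k f_{x,k} f^{(r)}_{k,y}` (and likewise for `f`)
the terms whose column `k` lies at a position `≥ a` vanish by induction. For the others
`e_{x,k}, f_{x,k} ∈ m`; since `e^{(r)}`, `f^{(r)}` transform under the adjoint action of
`Q(n)` like matrix units, these generators can be moved to the right at the cost of terms
`e^{(r)}_{x,y}`, `f^{(r)}_{x,y}` which vanish again, and on the right they act by `χ`.
Only `k = (p, a - 1)` survives, and the induction hypothesis applies to it. -/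

section SuperComm

variable {R : Type*} [Ring R] [Algebra ℂ R]

def superComm (ε : ℂ) (x y : R) : R := x * y - ε • (y * x)

lemma superComm_add_smul (ε c : ℂ) (x y z : R) :
    superComm ε x (y + c • z) = superComm ε x y + c • superComm ε x z := by
  simp only [superComm, mul_add, add_mul, mul_smul_comm, smul_mul_assoc]
  module

lemma superComm_sum {ι : Type*} (s : Finset ι) (ε : ℂ) (x : R) (y : ι → R) :
    superComm ε x (∑ i ∈ s, y i) = ∑ i ∈ s, superComm ε x (y i) := by
  simp only [superComm, Finset.mul_sum, Finset.sum_mul, Finset.smul_sum, Finset.sum_sub_distrib]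

lemma superComm_mul (ε₁ ε₂ : ℂ) (x y z : R) :
    superComm (ε₁ * ε₂) x (y * z) = superComm ε₁ x y * z + ε₁ • (y * superComm ε₂ x z) := by
  simp only [superComm, sub_mul, mul_sub, smul_sub, mul_smul_comm, smul_mul_assoc, mul_smul,
    mul_assoc]
  abel

lemma sum_kd_smul_left {M : Type*} [AddCommMonoid M] [Module ℂ M] {n : ℕ} (α : Fin n)
    (g : Fin n → M) : ∑ k, kd k α • g k = g α := by
  simp [kd, ite_smul]

lemma sum_kd_smul_right {M : Type*} [AddCommMonoid M] [Module ℂ M] {n : ℕ} (β : Fin n)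
    (g : Fin n → M) : ∑ k, kd β k • g k = g β := by
  simp [kd, ite_smul]

/-- `[X_{αβ}, Y_{γδ}} = t δ_{βγ} Z_{αδ} - ε δ_{δα} Z_{γβ}`: with `t = 1` and `ε = (-1)^{|X||Y|}`
this is the super-bracket of matrix units; Sergeev's elements need the twist `t`. -/
def MatrixUnitBracket {n : ℕ} (ε t : ℂ) (X Y Z : Fin n → Fin n → R) : Prop :=
  ∀ α β γ δ, superComm ε (X α β) (Y γ δ) = (t * kd β γ) • Z α δ - (ε * kd δ α) • Z γ β

lemma MatrixUnitBracket.superComm_sum_mul {n : ℕ} {X G G' H H' : Fin n → Fin n → R}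
    {ε ε₁ ε₂ t₁ t₂ : ℂ} (hG : MatrixUnitBracket ε₁ t₁ X G G')
    (hH : MatrixUnitBracket ε₂ t₂ X H H') (hε : ε₁ * ε₂ = ε) (α β γ δ : Fin n) :
    superComm ε (X α β) (∑ k, G γ k * H k δ) =
      (t₁ * kd β γ) • ∑ k, G' α k * H k δ - ε₁ • (G' γ β * H α δ)
        + (ε₁ * t₂) • (G γ β * H' α δ) - (ε * kd δ α) • ∑ k, G γ k * H' k β := by
  subst hε
  simp only [superComm_sum, superComm_mul, hG α β, hH α β, sub_mul, mul_sub, Finset.sum_add_distrib,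
    Finset.sum_sub_distrib, smul_sub, Finset.smul_sum, smul_mul_assoc, mul_smul_comm, mul_smul]
  simp only [← Finset.smul_sum, sum_kd_smul_left, sum_kd_smul_right]
  module

lemma SModEq.smul_of_tower {I : Submodule R R} {x y : R} (h : x ≡ y [SMOD I]) (c : ℂ) :
    c • x ≡ c • y [SMOD I] := by
  rw [SModEq.sub_mem] at h ⊢
  rw [← smul_sub]
  exact Submodule.smul_of_tower_mem _ c h

lemma mul_smodEq_of_superComm {I : Submodule R R} {x y z : R} {ε c : ℂ}
    (hx : x ≡ algebraMap ℂ R c [SMOD I]) (hxy : superComm ε x y ≡ z [SMOD I]) :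
    x * y ≡ (ε * c) • y + z [SMOD I] := by
  have hyx : y * x ≡ c • y [SMOD I] := by
    simpa only [smul_eq_mul, ← Algebra.commutes, ← Algebra.smul_def] using hx.smul y
  calc x * y = ε • (y * x) + superComm ε x y := by rw [superComm]; abel
    _ ≡ ε • (c • y) + z [SMOD I] := (hyx.smul_of_tower ε).add hxy
    _ = (ε * c) • y + z := by rw [mul_smul]

end SuperComm

section AdjointAction

variable {n : ℕ}

lemma matrixUnitBracket_Ue_Ue : MatrixUnitBracket 1 1 (@Ue n) Ue Ue := fun i j k l => by
  simpa [superComm, Ue] using RingQuot.mkAlgHom_rel ℂ (QRel.ee i j k l)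

lemma matrixUnitBracket_Ue_Uf : MatrixUnitBracket 1 1 (@Ue n) Uf Uf := fun i j k l => by
  simpa [superComm, Ue, Uf] using RingQuot.mkAlgHom_rel ℂ (QRel.ef i j k l)

lemma matrixUnitBracket_Uf_Ue : MatrixUnitBracket 1 1 (@Uf n) Ue Uf := fun i j k l => by
  have h := matrixUnitBracket_Ue_Uf k l i j
  simp only [superComm, one_smul, one_mul] at h ⊢
  rw [← neg_sub, h, neg_sub]

lemma matrixUnitBracket_Uf_Uf : MatrixUnitBracket (-1) 1 (@Uf n) Uf Ue := fun i j k l => by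
  have h : Uf i j * Uf k l + Uf k l * Uf i j = kd j k • Ue i l + kd l i • Ue k j := by
    simpa [Ue, Uf] using RingQuot.mkAlgHom_rel ℂ (QRel.ff i j k l)
  rw [superComm]
  linear_combination (norm := module) h

lemma eU_zero (i j : Fin n) : eU 0 i j = algebraMap ℂ (UQ n) (kd i j) := rfl

lemma fU_zero (i j : Fin n) : fU 0 i j = 0 := rfl

lemma eU_succ (r : ℕ) (i j : Fin n) :
    eU (r + 1) i j = ∑ k, Ue i k * eU r k j + (-1 : ℂ) ^ r • ∑ k, Uf i k * fU r k j := rfl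

lemma fU_succ (r : ℕ) (i j : Fin n) :
    fU (r + 1) i j = ∑ k, Ue i k * fU r k j + (-1 : ℂ) ^ r • ∑ k, Uf i k * eU r k j := rfl

lemma kd_mul_kd_comm (α β γ δ : Fin n) : kd β γ * kd α δ = kd δ α * kd γ β := by
  simp only [kd, eq_comm (a := δ), eq_comm (a := γ), mul_comm]

theorem matrixUnitBracket_Ue_eU_fU (r : ℕ) :
    MatrixUnitBracket 1 1 Ue (@eU n r) (eU r) ∧ MatrixUnitBracket 1 1 Ue (@fU n r) (fU r) := by
  induction r with
  | zero =>
    refine ⟨fun α β γ δ => ?_, fun α β γ δ => by simp [superComm, fU_zero]⟩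
    rw [superComm, eU_zero, one_smul, Algebra.commutes, sub_self]
    simp only [eU_zero, Algebra.algebraMap_eq_smul_one, smul_smul, one_mul, kd_mul_kd_comm,
      sub_self]
  | succ r ih =>
    constructor <;> intro α β γ δ <;> simp only [eU_succ, fU_succ, superComm_add_smul]
    · rw [matrixUnitBracket_Ue_Ue.superComm_sum_mul ih.1 (one_mul 1),
        matrixUnitBracket_Ue_Uf.superComm_sum_mul ih.2 (one_mul 1)]
      module
    · rw [matrixUnitBracket_Ue_Ue.superComm_sum_mul ih.2 (one_mul 1),
        matrixUnitBracket_Ue_Uf.superComm_sum_mul ih.1 (one_mul 1)]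
      module

theorem matrixUnitBracket_Uf_eU_fU (r : ℕ) :
    MatrixUnitBracket 1 ((-1) ^ (r + 1)) Uf (@eU n r) (fU r) ∧
      MatrixUnitBracket (-1) ((-1) ^ (r + 1)) Uf (@fU n r) (eU r) := by
  induction r with
  | zero =>
    refine ⟨fun α β γ δ => ?_, fun α β γ δ => ?_⟩
    · simp [superComm, eU_zero, fU_zero, Algebra.commutes]
    · simp only [superComm, eU_zero, fU_zero, mul_zero, zero_mul, smul_zero, sub_zero,
        Algebra.algebraMap_eq_smul_one, smul_smul]
      linear_combination (norm := module) (kd_mul_kd_comm α β γ δ) • (1 : UQ n)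
  | succ r ih =>
    constructor <;> intro α β γ δ <;> simp only [eU_succ, fU_succ, superComm_add_smul]
    · rw [matrixUnitBracket_Uf_Ue.superComm_sum_mul ih.1 (one_mul 1),
        matrixUnitBracket_Uf_Uf.superComm_sum_mul ih.2 (by norm_num)]
      rcases Nat.even_or_odd r with hr | hr <;> simp only [pow_succ, hr.neg_one_pow] <;> module
    · rw [matrixUnitBracket_Uf_Ue.superComm_sum_mul ih.2 (one_mul _),
        matrixUnitBracket_Uf_Uf.superComm_sum_mul ih.1 (mul_one _)]
      rcases Nat.even_or_odd r with hr | hr <;> simp only [pow_succ, hr.neg_one_pow] <;> module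
end AdjointAction

section Reduction

variable {n l : ℕ} (h : l ∣ n)

lemma bidx_inj {p q : Fin (n / l)} {a b : Fin l} : bidx h p a = bidx h q b ↔ p = q ∧ a = b := by
  refine ⟨fun he => ?_, fun ⟨hp, ha⟩ => hp ▸ ha ▸ rfl⟩
  have hv : l * p.val + a.val = l * q.val + b.val := congrArg Fin.val he
  have hl : 0 < l := Nat.pos_of_ne_zero fun hl => by simp [hl] at p; exact p.elim0
  have hab : a.val = b.val := by
    simpa [Nat.mul_add_mod, Nat.mod_eq_of_lt a.isLt, Nat.mod_eq_of_lt b.isLt] using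
      congrArg (· % l) hv
  exact ⟨Fin.ext (Nat.eq_of_mul_eq_mul_left hl (by omega)), Fin.ext hab⟩

lemma exists_bidx_eq (k : Fin n) : ∃ s c, bidx h s c = k := by
  have hl : 0 < l := Nat.pos_of_dvd_of_pos h k.pos
  exact ⟨⟨k.val / l, Nat.div_lt_div_of_lt_of_dvd h k.isLt⟩, ⟨k.val % l, Nat.mod_lt _ hl⟩,
    Fin.ext (Nat.div_add_mod k.val l)⟩

lemma Ue_smodEq_chi {p q : Fin (n / l)} {a b : Fin l} (hba : b.val < a.val) :
    Ue (bidx h p a) (bidx h q b) ≡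
      algebraMap ℂ (UQ n) (if a.val = b.val + 1 ∧ p = q then 1 else 0) [SMOD Ichi n l h] :=
  SModEq.sub_mem.mpr (Submodule.subset_span ⟨p, q, a, b, hba, Or.inl rfl⟩)

lemma Uf_smodEq_zero {p q : Fin (n / l)} {a b : Fin l} (hba : b.val < a.val) :
    Uf (bidx h p a) (bidx h q b) ≡ algebraMap ℂ (UQ n) 0 [SMOD Ichi n l h] := by
  rw [map_zero, SModEq.zero]
  exact Submodule.subset_span ⟨p, q, a, b, hba, Or.inr rfl⟩

variable {h}

lemma Ue_mul_smodEq {Y : Fin n → Fin n → UQ n} (hY : MatrixUnitBracket 1 1 Ue Y Y)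
    {p : Fin (n / l)} {a a' : Fin l} (ha : a.val = a'.val + 1) {y : Fin n} (hy : y ≠ bidx h p a)
    (hlow : ∀ s (c : Fin l), a.val ≤ c.val → Y (bidx h s c) y ≡ 0 [SMOD Ichi n l h]) (k : Fin n) :
    Ue (bidx h p a) k * Y k y ≡ if k = bidx h p a' then Y k y else 0 [SMOD Ichi n l h] := by
  obtain ⟨s, c, rfl⟩ := exists_bidx_eq h k
  by_cases hca : c.val < a.val
  · have hbr : superComm 1 (Ue (bidx h p a) (bidx h s c)) (Y (bidx h s c) y) ≡ 0
        [SMOD Ichi n l h] := by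
      rw [hY, kd, if_pos rfl, kd, if_neg hy, mul_zero, zero_smul, sub_zero, mul_one, one_smul]
      exact hlow p a le_rfl
    have hchi : (a.val = c.val + 1 ∧ p = s) ↔ bidx h s c = bidx h p a' := by
      rw [bidx_inj, Fin.ext_iff]; omega
    simpa only [hchi, one_mul, ite_smul, one_smul, zero_smul, add_zero] using
      mul_smodEq_of_superComm (Ue_smodEq_chi h hca) hbr
  · have hk : bidx h s c ≠ bidx h p a' := by
      rw [Ne, bidx_inj, Fin.ext_iff]; omega
    rw [if_neg hk, ← mul_zero (Ue _ _)]
    exact (hlow s c (by omega)).smul _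

lemma Uf_mul_smodEq {Y Y' : Fin n → Fin n → UQ n} {ε t : ℂ} (hY : MatrixUnitBracket ε t Uf Y Y')
    {p : Fin (n / l)} {a : Fin l} {y : Fin n} (hy : y ≠ bidx h p a)
    (hY' : Y' (bidx h p a) y ≡ 0 [SMOD Ichi n l h])
    (hlow : ∀ s (c : Fin l), a.val ≤ c.val → Y (bidx h s c) y ≡ 0 [SMOD Ichi n l h]) (k : Fin n) :
    Uf (bidx h p a) k * Y k y ≡ 0 [SMOD Ichi n l h] := by
  obtain ⟨s, c, rfl⟩ := exists_bidx_eq h k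
  by_cases hca : c.val < a.val
  · have hbr : superComm ε (Uf (bidx h p a) (bidx h s c)) (Y (bidx h s c) y) ≡ 0
        [SMOD Ichi n l h] := by
      rw [hY, kd, if_pos rfl, kd, if_neg hy, mul_zero, zero_smul, sub_zero, mul_one,
        ← smul_zero t]
      exact hY'.smul_of_tower t
    simpa using mul_smodEq_of_superComm (Uf_smodEq_zero h hca) hbr
  · rw [← mul_zero (Uf _ _)]
    exact (hlow s c (by omega)).smul _

end Reduction

section Induction

variable {n l : ℕ} (h : l ∣ n)

def ChiReduction (r : ℕ) : Prop :=
  ∀ (p q : Fin (n / l)) (a b : Fin l), b.val + r ≤ a.val →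
    eU r (bidx h p a) (bidx h q b) ≡
        algebraMap ℂ (UQ n) (if p = q ∧ a.val = b.val + r then 1 else 0) [SMOD Ichi n l h] ∧
      fU r (bidx h p a) (bidx h q b) ≡ 0 [SMOD Ichi n l h]

variable {h}

lemma ChiReduction.eU_smodEq_zero {r : ℕ} (H : ChiReduction h r) {p q : Fin (n / l)}
    {a b : Fin l} (hba : b.val + r < a.val) :
    eU r (bidx h p a) (bidx h q b) ≡ 0 [SMOD Ichi n l h] := by
  simpa [show a.val ≠ b.val + r by omega] using (H p q a b hba.le).1

lemma chiReduction_zero : ChiReduction h 0 := fun p q a b _ => by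
  refine ⟨?_, by rw [fU_zero]⟩
  rw [eU_zero, kd]
  simp_rw [bidx_inj, add_zero, ← Fin.ext_iff]
  rfl

lemma ChiReduction.succ {r : ℕ} (H : ChiReduction h r) : ChiReduction h (r + 1) := by
  intro p q a b hba
  obtain ⟨a', ha⟩ : ∃ a' : Fin l, a.val = a'.val + 1 := ⟨⟨a.val - 1, by omega⟩, by simp; omega⟩
  have hy : bidx h q b ≠ bidx h p a := by rw [Ne, bidx_inj, Fin.ext_iff]; omega
  have hlowE : ∀ s (c : Fin l), a.val ≤ c.val → eU r (bidx h s c) (bidx h q b) ≡ 0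
      [SMOD Ichi n l h] := fun s c hc => H.eU_smodEq_zero (by omega)
  have hlowF : ∀ s (c : Fin l), a.val ≤ c.val → fU r (bidx h s c) (bidx h q b) ≡ 0
      [SMOD Ichi n l h] := fun s c hc => (H s q c b (by omega)).2
  have hsumE : ∑ k, Ue (bidx h p a) k * eU r k (bidx h q b) ≡ eU r (bidx h p a') (bidx h q b)
      [SMOD Ichi n l h] := by
    simpa using SModEq.sum (s := Finset.univ) fun k _ =>
      Ue_mul_smodEq (matrixUnitBracket_Ue_eU_fU r).1 ha hy hlowE k
  have hsumF : ∑ k, Ue (bidx h p a) k * fU r k (bidx h q b) ≡ fU r (bidx h p a') (bidx h q b)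
      [SMOD Ichi n l h] := by
    simpa using SModEq.sum (s := Finset.univ) fun k _ =>
      Ue_mul_smodEq (matrixUnitBracket_Ue_eU_fU r).2 ha hy hlowF k
  have hsumFF : ∑ k, Uf (bidx h p a) k * fU r k (bidx h q b) ≡ 0 [SMOD Ichi n l h] := by
    simpa using SModEq.sum (s := Finset.univ) fun k _ =>
      Uf_mul_smodEq (matrixUnitBracket_Uf_eU_fU r).2 hy (hlowE p a le_rfl) hlowF k
  have hsumFE : ∑ k, Uf (bidx h p a) k * eU r k (bidx h q b) ≡ 0 [SMOD Ichi n l h] := by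
    simpa using SModEq.sum (s := Finset.univ) fun k _ =>
      Uf_mul_smodEq (matrixUnitBracket_Uf_eU_fU r).1 hy (hlowF p a le_rfl) hlowE k
  have hcond : (p = q ∧ a.val = b.val + (r + 1)) ↔ (p = q ∧ a'.val = b.val + r) := by omega
  constructor
  · calc eU (r + 1) (bidx h p a) (bidx h q b)
        ≡ eU r (bidx h p a') (bidx h q b) + (-1 : ℂ) ^ r • 0 [SMOD Ichi n l h] :=
          hsumE.add (hsumFF.smul_of_tower _)
      _ ≡ _ [SMOD Ichi n l h] := by
        simpa only [smul_zero, add_zero, hcond] using (H p q a' b (by omega)).1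
  · calc fU (r + 1) (bidx h p a) (bidx h q b)
        ≡ fU r (bidx h p a') (bidx h q b) + (-1 : ℂ) ^ r • 0 [SMOD Ichi n l h] :=
          hsumF.add (hsumFE.smul_of_tower _)
      _ ≡ 0 [SMOD Ichi n l h] := by
        simpa only [smul_zero, add_zero] using (H p q a' b (by omega)).2

theorem chiReduction (r : ℕ) : ChiReduction h r := by
  induction r with
  | zero => exact chiReduction_zero
  | succ r ih => exact ih.succ

lemma piq_eq_of_smodEq {x y : UQ n} (hxy : x ≡ y [SMOD Ichi n l h]) : piq n l h x = piq n l h y :=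
  (Submodule.Quotient.eq _).mpr (SModEq.sub_mem.mp hxy)

end Induction

/-- Let `l ∣ n`, `1 ≤ p,q ≤ n/l` and `1 ≤ r ≤ l-1`.  Then in
`U(Q(n))/I_χ`:  `π(e^{(r)}_{l(p-1)+m, l(q-1)+1}) = δ_{pq}` if `m = r+1`,
`π(e^{(r)}_{l(p-1)+m, l(q-1)+1}) = 0` if `r+2 ≤ m ≤ l`, and
`π(f^{(r)}_{l(p-1)+m, l(q-1)+1}) = 0` if `r+1 ≤ m ≤ l`. -/
theorem statement4 (n l : ℕ) (hl : 0 < l) (h : l ∣ n) (p q : Fin (n / l))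
    (r : ℕ) (hr2 : r ≤ l - 1) :
    (piq n l h (eU r (bidx h p ⟨r, by omega⟩) (bidx h q ⟨0, hl⟩)) =
      piq n l h (algebraMap ℂ (UQ n) (kd p q))) ∧
    (∀ (m : ℕ) (_ : r + 2 ≤ m) (_ : m ≤ l),
      piq n l h (eU r (bidx h p ⟨m - 1, by omega⟩) (bidx h q ⟨0, hl⟩)) = 0) ∧
    (∀ (m : ℕ) (_ : r + 1 ≤ m) (_ : m ≤ l),
      piq n l h (fU r (bidx h p ⟨m - 1, by omega⟩) (bidx h q ⟨0, hl⟩)) = 0) := by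
  refine ⟨piq_eq_of_smodEq ?_, fun m hm _ => ?_, fun m hm _ => ?_⟩
  · simpa [kd] using (chiReduction r p q ⟨r, _⟩ ⟨0, hl⟩ (by simp)).1
  · rw [← map_zero (piq n l h)]
    exact piq_eq_of_smodEq ((chiReduction r).eU_smodEq_zero (by simp; omega))
  · rw [← map_zero (piq n l h)]
    exact piq_eq_of_smodEq (chiReduction r p q _ _ (by simp; omega)).2
end
end

section
/- Let l divide n, 1 ≤ p,q ≤ n/l, and 1 ≤ m ≤ l. Then in U(Q(n))/I_χ: π(e_{l(p−1)+m, l(q−1)+1}^{(m)}) = Σ_{k=1}^{m} π(e_{l(p−1)+k, l(q−1)+k}) and π(f_{l(p−1)+m, l(q−1)+1}^{(m)}) = Σ_{k=1}^{m} (−1)^{k−1} π(f_{l(p−1)+k, l(q−1)+k}). -/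
noncomputable section
open scoped Classical

set_option linter.unusedVariables false

/-!
Sergeev's matrices `E⁽ʳ⁾ = (e⁽ʳ⁾ᵢⱼ)` and `F⁽ʳ⁾ = (f⁽ʳ⁾ᵢⱼ)` also satisfy the recursion with the
generator matrices `E = (eᵢⱼ)`, `F = (fᵢⱼ)` acting on the right,
`E⁽ʳ⁺¹⁾ = E⁽ʳ⁾E - F⁽ʳ⁾F` and `F⁽ʳ⁺¹⁾ = E⁽ʳ⁾F - F⁽ʳ⁾E`, and their entries satisfy the
commutation relations of the generators with `e_{kl}`, `f_{kl}` (up to a sign `(-1)ʳ`). Modulo the left ideal `I_χ`, in a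
product `e⁽ʳ⁾_{ik} e_{kj}` with `e_{kj} ∈ m` the generator can be replaced by `χ(e_{kj})`;
otherwise `e_{kj}` can be moved to the left of `e⁽ʳ⁾_{ik}`, and `I_χ` absorbs left factors.
Induction on `r` then shows `e⁽ʳ⁾_{(p,a),(q,b)} ≡ δ_{a,b+r} δ_{pq}` and `f⁽ʳ⁾_{(p,a),(q,b)} ≡ 0`
whenever `a ≥ b + r`; on the boundary `a = b + r - 1` the same reduction peels off one
diagonal generator `e_{(p,b),(q,b)}` resp. `f_{(p,b),(q,b)}` at a time.
-/

section SergeevSeq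

variable {R : Type*} [Ring R] [Algebra ℂ R]

def sergeevSeq (E F : R) : ℕ → R × R
  | 0 => (1, 0)
  | r + 1 => (E * (sergeevSeq E F r).1 + (-1 : ℂ) ^ r • (F * (sergeevSeq E F r).2),
      E * (sergeevSeq E F r).2 + (-1 : ℂ) ^ r • (F * (sergeevSeq E F r).1))

variable (E F : R)

lemma sergeevSeq_succ (r : ℕ) :
    sergeevSeq E F (r + 1) =
      (E * (sergeevSeq E F r).1 + (-1 : ℂ) ^ r • (F * (sergeevSeq E F r).2),
        E * (sergeevSeq E F r).2 + (-1 : ℂ) ^ r • (F * (sergeevSeq E F r).1)) := rfl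

lemma sergeevSeq_succ_eq_mul_right (r : ℕ) :
    sergeevSeq E F (r + 1) =
      ((sergeevSeq E F r).1 * E - (sergeevSeq E F r).2 * F,
        (sergeevSeq E F r).1 * F - (sergeevSeq E F r).2 * E) := by
  induction r with
  | zero => simp [sergeevSeq]
  | succ r ih =>
    conv_lhs => rw [sergeevSeq_succ, ih]
    conv_rhs => rw [sergeevSeq_succ E F r]
    simp only [Prod.mk.injEq, mul_sub, add_mul, smul_mul_assoc, mul_assoc, pow_succ, mul_neg_one,
      neg_smul, smul_sub]
    constructor <;> abel

variable {E F}

lemma commute_sergeevSeq {X : R} (hE : Commute E X) (hF : Commute F X) (r : ℕ) :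
    Commute (sergeevSeq E F r).1 X ∧ Commute (sergeevSeq E F r).2 X := by
  induction r with
  | zero => exact ⟨Commute.one_left X, Commute.zero_left X⟩
  | succ r ih =>
    exact ⟨(hE.mul_left ih.1).add_left ((hF.mul_left ih.2).smul_left _),
      (hE.mul_left ih.2).add_left ((hF.mul_left ih.1).smul_left _)⟩

lemma sergeevSeq_odd_commutators {H D : R} (hE : E * H - H * E = F * D - D * F)
    (hF : F * H + H * F = E * D + D * E) (r : ℕ) :
    (sergeevSeq E F r).1 * H - H * (sergeevSeq E F r).1 =
        (sergeevSeq E F r).2 * D + (-1 : ℂ) ^ r • (D * (sergeevSeq E F r).2) ∧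
      (sergeevSeq E F r).2 * H + H * (sergeevSeq E F r).2 =
        (sergeevSeq E F r).1 * D - (-1 : ℂ) ^ r • (D * (sergeevSeq E F r).1) := by
  induction r with
  | zero => simp [sergeevSeq]
  | succ r ih =>
    obtain ⟨hL, hK⟩ := ih
    have hs : (-1 : ℂ) ^ r * (-1) ^ r = 1 := by rw [← mul_pow]; norm_num
    simp only [sergeevSeq_succ, pow_succ, mul_neg_one]
    set s := (-1 : ℂ) ^ r
    set L := (sergeevSeq E F r).1
    set K := (sergeevSeq E F r).2
    constructor
    · linear_combination (norm := skip) E * hL + hE * L + s • (F * hK) - s • (hF * K)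
      simp only [mul_add, add_mul, mul_sub, sub_mul, smul_mul_assoc, mul_smul_comm, mul_assoc,
        smul_add, smul_sub, smul_smul, neg_mul, hs, one_smul, neg_smul]
      abel
    · linear_combination (norm := skip) E * hK - hE * K + s • (F * hL) + s • (hF * L)
      simp only [mul_add, add_mul, mul_sub, sub_mul, smul_mul_assoc, mul_smul_comm, mul_assoc,
        smul_add, smul_sub, smul_smul, neg_mul, hs, one_smul, neg_smul]
      abel

end SergeevSeq

section MatrixSingle

variable {m α : Type*} [Fintype m] [DecidableEq m] [Semiring α]

lemma Matrix.mul_single_one_apply (M : Matrix m m α) (a b i j : m) :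
    (M * Matrix.single a b (1 : α)) i j = if j = b then M i a else 0 := by
  split_ifs with h
  · rw [h, Matrix.mul_single_apply_same, mul_one]
  · exact Matrix.mul_single_apply_of_ne _ _ _ _ _ h M

lemma Matrix.single_one_mul_apply (M : Matrix m m α) (a b i j : m) :
    (Matrix.single a b (1 : α) * M) i j = if i = a then M b j else 0 := by
  split_ifs with h
  · rw [h, Matrix.single_mul_apply_same, one_mul]
  · exact Matrix.single_mul_apply_of_ne _ _ _ _ _ h M

end MatrixSingle

section SergeevMatrices

variable {n : ℕ}

lemma Ue_mul_Ue_sub (i j k l : Fin n) :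
    Ue i j * Ue k l - Ue k l * Ue i j = kd j k • Ue i l - kd l i • Ue k j := by
  simpa only [map_sub, map_mul, map_smul, Ue] using RingQuot.mkAlgHom_rel ℂ (QRel.ee i j k l)

lemma Ue_mul_Uf_sub (i j k l : Fin n) :
    Ue i j * Uf k l - Uf k l * Ue i j = kd j k • Uf i l - kd l i • Uf k j := by
  simpa only [map_sub, map_mul, map_smul, Ue, Uf] using RingQuot.mkAlgHom_rel ℂ (QRel.ef i j k l)

lemma Uf_mul_Uf_add (i j k l : Fin n) :
    Uf i j * Uf k l + Uf k l * Uf i j = kd j k • Ue i l + kd l i • Ue k j := by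
  simpa only [map_add, map_mul, map_smul, Ue, Uf] using RingQuot.mkAlgHom_rel ℂ (QRel.ff i j k l)

lemma sergeevSeq_of_Ue_of_Uf (r : ℕ) :
    sergeevSeq (Matrix.of Ue) (Matrix.of Uf) r =
      ((Matrix.of (eU r), Matrix.of (fU r)) : Matrix (Fin n) (Fin n) (UQ n) × _) := by
  induction r with
  | zero => ext i j <;> simp [sergeevSeq, eU, fU, efU, kd, Matrix.one_apply]
  | succ r ih =>
    rw [sergeevSeq_succ, ih]
    ext i j <;> simp [eU, fU, efU, Matrix.mul_apply, Finset.smul_sum]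

/- With `G` the scalar matrix `e_{kl}` (or `f_{kl}`) and `D` the matrix unit at `(l, k)`, the
`(i, j)` entries of `X * G - G * X` and `X * D - D * X` are `[x_{ij}, e_{kl}]` and
`δ_{jk} x_{il} - δ_{li} x_{kj}`: the defining relations of `U(Q(n))` become matrix identities. -/

lemma commute_of_Ue_diagonal_sub_single (k l : Fin n) :
    Commute (Matrix.of Ue) (Matrix.diagonal (fun _ => Ue k l) - Matrix.single l k 1) := by
  rw [Commute, SemiconjBy, mul_sub, sub_mul, sub_eq_sub_iff_sub_eq_sub]
  ext i j
  simp only [Matrix.sub_apply, Matrix.mul_diagonal, Matrix.diagonal_mul,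
    Matrix.mul_single_one_apply, Matrix.single_one_mul_apply, Matrix.of_apply, Ue_mul_Ue_sub]
  rcases eq_or_ne i l with rfl | hi
  · by_cases hj : j = k <;> simp [kd, hj]
  · by_cases hj : j = k <;> simp [kd, hj, hi, hi.symm]

lemma commute_of_Uf_diagonal_sub_single (k l : Fin n) :
    Commute (Matrix.of Uf) (Matrix.diagonal (fun _ => Ue k l) - Matrix.single l k 1) := by
  rw [Commute, SemiconjBy, mul_sub, sub_mul, sub_eq_sub_iff_sub_eq_sub]
  ext i j
  simp only [Matrix.sub_apply, Matrix.mul_diagonal, Matrix.diagonal_mul,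
    Matrix.mul_single_one_apply, Matrix.single_one_mul_apply, Matrix.of_apply]
  rw [← neg_sub, Ue_mul_Uf_sub]
  rcases eq_or_ne i l with rfl | hi
  · by_cases hj : j = k <;> simp [kd, hj]
  · by_cases hj : j = k <;> simp [kd, hj, hi, hi.symm]

lemma of_Ue_mul_diagonal_Uf_sub (k l : Fin n) :
    Matrix.of Ue * Matrix.diagonal (fun _ => Uf k l) -
        Matrix.diagonal (fun _ => Uf k l) * Matrix.of Ue =
      Matrix.of Uf * Matrix.single l k 1 - Matrix.single l k 1 * Matrix.of Uf := by
  ext i j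
  simp only [Matrix.sub_apply, Matrix.mul_diagonal, Matrix.diagonal_mul,
    Matrix.mul_single_one_apply, Matrix.single_one_mul_apply, Matrix.of_apply, Ue_mul_Uf_sub]
  rcases eq_or_ne i l with rfl | hi
  · by_cases hj : j = k <;> simp [kd, hj]
  · by_cases hj : j = k <;> simp [kd, hj, hi, hi.symm]

lemma of_Uf_mul_diagonal_Uf_add (k l : Fin n) :
    Matrix.of Uf * Matrix.diagonal (fun _ => Uf k l) +
        Matrix.diagonal (fun _ => Uf k l) * Matrix.of Uf =
      Matrix.of Ue * Matrix.single l k 1 + Matrix.single l k 1 * Matrix.of Ue := by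
  ext i j
  simp only [Matrix.add_apply, Matrix.mul_diagonal, Matrix.diagonal_mul,
    Matrix.mul_single_one_apply, Matrix.single_one_mul_apply, Matrix.of_apply, Uf_mul_Uf_add]
  rcases eq_or_ne i l with rfl | hi
  · by_cases hj : j = k <;> simp [kd, hj]
  · by_cases hj : j = k <;> simp [kd, hj, hi, hi.symm]

lemma eU_succ_eq_sum (r : ℕ) (i j : Fin n) :
    eU (r + 1) i j = ∑ k, (eU r i k * Ue k j - fU r i k * Uf k j) := by
  have h := congr_arg (fun x => x.1 i j)
    (sergeevSeq_succ_eq_mul_right (Matrix.of Ue) (Matrix.of Uf) r)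
  simpa [sergeevSeq_of_Ue_of_Uf, Matrix.mul_apply, Finset.sum_sub_distrib] using h

lemma fU_succ_eq_sum (r : ℕ) (i j : Fin n) :
    fU (r + 1) i j = ∑ k, (eU r i k * Uf k j - fU r i k * Ue k j) := by
  have h := congr_arg (fun x => x.2 i j)
    (sergeevSeq_succ_eq_mul_right (Matrix.of Ue) (Matrix.of Uf) r)
  simpa [sergeevSeq_of_Ue_of_Uf, Matrix.mul_apply, Finset.sum_sub_distrib] using h

lemma eU_mul_Ue_sub_fU_mul_Uf (r : ℕ) {i c : Fin n} (hic : i ≠ c) (k : Fin n) :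
    eU r i k * Ue k c - fU r i k * Uf k c = Ue k c * eU r i k + Uf k c * fU r i k := by
  have he := congr_fun₂ (commute_sergeevSeq (commute_of_Ue_diagonal_sub_single k c)
    (commute_of_Uf_diagonal_sub_single k c) r).1.eq i k
  have hf := congr_fun₂ (sergeevSeq_odd_commutators (of_Ue_mul_diagonal_Uf_sub k c)
    (of_Uf_mul_diagonal_Uf_add k c) r).2 i k
  simp only [sergeevSeq_of_Ue_of_Uf, mul_sub, sub_mul, Matrix.sub_apply, Matrix.add_apply,
    Matrix.smul_apply, Matrix.mul_diagonal, Matrix.diagonal_mul, Matrix.mul_single_one_apply,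
    Matrix.single_one_mul_apply, Matrix.of_apply, if_neg hic, smul_zero, sub_zero] at he hf
  linear_combination (norm := abel) he - hf

lemma eU_mul_Uf_sub_fU_mul_Ue (r : ℕ) {i c : Fin n} (hic : i ≠ c) (k : Fin n) :
    eU r i k * Uf k c - fU r i k * Ue k c = Uf k c * eU r i k - Ue k c * fU r i k := by
  have he := congr_fun₂ (sergeevSeq_odd_commutators (of_Ue_mul_diagonal_Uf_sub k c)
    (of_Uf_mul_diagonal_Uf_add k c) r).1 i k
  have hf := congr_fun₂ (commute_sergeevSeq (commute_of_Ue_diagonal_sub_single k c)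
    (commute_of_Uf_diagonal_sub_single k c) r).2.eq i k
  simp only [sergeevSeq_of_Ue_of_Uf, mul_sub, sub_mul, Matrix.sub_apply, Matrix.add_apply,
    Matrix.smul_apply, Matrix.mul_diagonal, Matrix.diagonal_mul, Matrix.mul_single_one_apply,
    Matrix.single_one_mul_apply, Matrix.of_apply, if_neg hic, smul_zero, add_zero,
    sub_zero] at he hf
  linear_combination (norm := abel) he - hf

/- `RingQuot` equips `UQ n` with its own negation, which `simp` does not identify with the
module negation in `neg_smul`. -/
lemma neg_one_pow_succ_smul (k : ℕ) (x : UQ n) : (-1 : ℂ) ^ (k + 1) • x = -((-1 : ℂ) ^ k • x) := by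
  rw [pow_succ, mul_neg_one]
  exact neg_smul ((-1 : ℂ) ^ k) x

end SergeevMatrices

section Blocks

variable {n l : ℕ} (h : l ∣ n)

def blockEquiv : Fin (n / l) × Fin l ≃ Fin n :=
  finProdFinEquiv.trans (finCongr (Nat.div_mul_cancel h))

lemma blockEquiv_apply (p : Fin (n / l)) (a : Fin l) : blockEquiv h (p, a) = bidx h p a :=
  Fin.ext (by simp [blockEquiv, finProdFinEquiv, bidx, add_comm])

lemma sum_eq_sum_bidx {M : Type*} [AddCommMonoid M] (g : Fin n → M) :
    ∑ k, g k = ∑ p, ∑ a, g (bidx h p a) := by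
  rw [← Fintype.sum_prod_type']
  exact (Fintype.sum_equiv (blockEquiv h) _ _ fun x => by rw [← blockEquiv_apply]).symm

lemma sum_sum_ite_eq_succ {M : Type*} [AddCommMonoid M] (X : Fin (n / l) → Fin l → M)
    (q : Fin (n / l)) (b : Fin l) (hb : b.val + 1 < l) :
    ∑ s, ∑ t : Fin l, (if t.val = b.val + 1 ∧ s = q then X s t else 0) = X q ⟨b.val + 1, hb⟩ := by
  rw [Finset.sum_eq_single q, Finset.sum_eq_single ⟨b.val + 1, hb⟩] <;> simp_all [Fin.ext_iff]

end Blocks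

section Reduction

variable {n l : ℕ} (h : l ∣ n)

lemma mul_Ue_smodEq (u : UQ n) {p q : Fin (n / l)} {a b : Fin l} (hba : b.val < a.val) :
    u * Ue (bidx h p a) (bidx h q b) ≡ (if a.val = b.val + 1 ∧ p = q then u else 0)
      [SMOD Ichi n l h] := by
  have hmem : u * (Ue (bidx h p a) (bidx h q b) -
      algebraMap ℂ (UQ n) (if a.val = b.val + 1 ∧ p = q then 1 else 0)) ∈ Ichi n l h :=
    (Ichi n l h).smul_mem u (Submodule.subset_span ⟨p, q, a, b, hba, Or.inl rfl⟩)
  rw [SModEq.sub_mem]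
  split_ifs at hmem ⊢ <;> simpa [mul_sub] using hmem

lemma mul_Uf_smodEq (u : UQ n) {p q : Fin (n / l)} {a b : Fin l} (hba : b.val < a.val) :
    u * Uf (bidx h p a) (bidx h q b) ≡ 0 [SMOD Ichi n l h] :=
  SModEq.zero.mpr ((Ichi n l h).smul_mem u (Submodule.subset_span ⟨p, q, a, b, hba, Or.inr rfl⟩))

lemma eU_succ_smodEq (r : ℕ) {i : Fin n} {q : Fin (n / l)} {b : Fin l} (hb : b.val + 1 < l)
    (hi : i ≠ bidx h q b) :
    eU (r + 1) i (bidx h q b) ≡ eU r i (bidx h q ⟨b.val + 1, hb⟩) +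
      ∑ s, ∑ t ≤ b, (Ue (bidx h s t) (bidx h q b) * eU r i (bidx h s t) +
        Uf (bidx h s t) (bidx h q b) * fU r i (bidx h s t)) [SMOD Ichi n l h] := by
  rw [eU_succ_eq_sum, sum_eq_sum_bidx h,
    ← sum_sum_ite_eq_succ (fun s t => eU r i (bidx h s t)) q b hb, ← Finset.filter_ge_eq_Iic]
  simp only [Finset.sum_filter, ← Finset.sum_add_distrib]
  refine SModEq.sum fun s _ => SModEq.sum fun t _ => ?_
  by_cases hbt : b < t
  · rw [if_neg (not_le.mpr hbt), add_zero, ← sub_zero (ite _ _ _)]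
    exact (mul_Ue_smodEq h _ hbt).sub (mul_Uf_smodEq h _ hbt)
  · rw [if_neg (by omega), if_pos (not_lt.mp hbt), zero_add, eU_mul_Ue_sub_fU_mul_Uf r hi]

lemma fU_succ_smodEq (r : ℕ) {i : Fin n} {q : Fin (n / l)} {b : Fin l} (hb : b.val + 1 < l)
    (hi : i ≠ bidx h q b) :
    fU (r + 1) i (bidx h q b) ≡ -fU r i (bidx h q ⟨b.val + 1, hb⟩) +
      ∑ s, ∑ t ≤ b, (Uf (bidx h s t) (bidx h q b) * eU r i (bidx h s t) -
        Ue (bidx h s t) (bidx h q b) * fU r i (bidx h s t)) [SMOD Ichi n l h] := by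
  rw [fU_succ_eq_sum, sum_eq_sum_bidx h,
    ← sum_sum_ite_eq_succ (fun s t => fU r i (bidx h s t)) q b hb, ← Finset.filter_ge_eq_Iic,
    ← Finset.sum_neg_distrib]
  simp only [Finset.sum_filter, ← Finset.sum_neg_distrib, ← Finset.sum_add_distrib]
  refine SModEq.sum fun s _ => SModEq.sum fun t _ => ?_
  by_cases hbt : b < t
  · rw [if_neg (not_le.mpr hbt), add_zero, ← zero_sub (ite _ _ _)]
    exact (mul_Uf_smodEq h _ hbt).sub (mul_Ue_smodEq h _ hbt)
  · rw [if_neg (by omega), if_pos (not_lt.mp hbt), neg_zero, zero_add,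
      eU_mul_Uf_sub_fU_mul_Ue r hi]

end Reduction

section Induction

variable {n l : ℕ} (h : l ∣ n)

lemma eU_fU_smodEq_of_le (r : ℕ) {p q : Fin (n / l)} {a b : Fin l} (hab : b.val + r ≤ a.val) :
    eU r (bidx h p a) (bidx h q b) ≡ (if a.val = b.val + r ∧ p = q then 1 else 0)
        [SMOD Ichi n l h] ∧
      fU r (bidx h p a) (bidx h q b) ≡ 0 [SMOD Ichi n l h] := by
  induction r generalizing q b with
  | zero =>
    refine ⟨?_, SModEq.rfl⟩
    have : bidx h p a = bidx h q b ↔ a.val = b.val + 0 ∧ p = q := by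
      rw [bidx_inj, add_zero, ← Fin.ext_iff, and_comm]
    simp only [eU, efU, kd, this]
    split_ifs <;> simp
  | succ r ih =>
    have hb : b.val + 1 < l := by omega
    have hi : bidx h p a ≠ bidx h q b := fun he => by
      have := congrArg Fin.val ((bidx_inj h).mp he).2
      omega
    have hI : ∀ s, ∀ t ≤ b, eU r (bidx h p a) (bidx h s t) ∈ Ichi n l h ∧
        fU r (bidx h p a) (bidx h s t) ∈ Ichi n l h := fun s t htb => by
      rw [Fin.le_def] at htb
      obtain ⟨he, hf⟩ := ih (q := s) (b := t) (by omega)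
      rw [if_neg (by omega)] at he
      exact ⟨SModEq.zero.mp he, SModEq.zero.mp hf⟩
    have he := (ih (q := q) (b := ⟨b.val + 1, hb⟩) (by simp; omega)).1
    have hf := (ih (q := q) (b := ⟨b.val + 1, hb⟩) (by simp; omega)).2
    constructor
    · have hsum : ∑ s, ∑ t ≤ b, (Ue (bidx h s t) (bidx h q b) * eU r (bidx h p a) (bidx h s t) +
          Uf (bidx h s t) (bidx h q b) * fU r (bidx h p a) (bidx h s t)) ∈ Ichi n l h :=
        Submodule.sum_mem _ fun s _ => Submodule.sum_mem _ fun t ht =>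
          add_mem (Submodule.smul_mem _ _ (hI s t (Finset.mem_Iic.mp ht)).1)
            (Submodule.smul_mem _ _ (hI s t (Finset.mem_Iic.mp ht)).2)
      refine (eU_succ_smodEq h r hb hi).trans ?_
      simpa [add_right_comm _ 1 r, add_assoc] using he.add (SModEq.zero.mpr hsum)
    · have hsum : ∑ s, ∑ t ≤ b, (Uf (bidx h s t) (bidx h q b) * eU r (bidx h p a) (bidx h s t) -
          Ue (bidx h s t) (bidx h q b) * fU r (bidx h p a) (bidx h s t)) ∈ Ichi n l h :=
        Submodule.sum_mem _ fun s _ => Submodule.sum_mem _ fun t ht =>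
          sub_mem (Submodule.smul_mem _ _ (hI s t (Finset.mem_Iic.mp ht)).1)
            (Submodule.smul_mem _ _ (hI s t (Finset.mem_Iic.mp ht)).2)
      refine (fU_succ_smodEq h r hb hi).trans ?_
      simpa using hf.neg.add (SModEq.zero.mpr hsum)

lemma sum_mul_eU_smodEq (r : ℕ) (X : Fin (n / l) → Fin l → UQ n) {p : Fin (n / l)}
    {a b : Fin l} (hab : a.val = b.val + r) :
    ∑ s, ∑ t ≤ b, X s t * eU r (bidx h p a) (bidx h s t) ≡ X p b [SMOD Ichi n l h] := by
  refine (SModEq.sum fun s _ => SModEq.sum fun t ht =>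
    ((eU_fU_smodEq_of_le h r ?_).1.smul (X s t))).trans ?_
  · have := Fin.le_def.mp (Finset.mem_Iic.mp ht)
    omega
  · simp only [smul_eq_mul, mul_ite, mul_one, mul_zero]
    rw [Fintype.sum_eq_single p fun s hsp =>
        Finset.sum_eq_zero fun t _ => if_neg fun hc => hsp hc.2.symm,
      Finset.sum_eq_single_of_mem b (Finset.mem_Iic.mpr le_rfl) fun t ht htb => if_neg ?_,
      if_pos ⟨hab, rfl⟩]
    have := Fin.le_def.mp (Finset.mem_Iic.mp ht)
    have := Fin.val_ne_of_ne htb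
    omega

lemma sum_mul_fU_smodEq (r : ℕ) (Y : Fin (n / l) → Fin l → UQ n) {p : Fin (n / l)}
    {a b : Fin l} (hab : b.val + r ≤ a.val) :
    ∑ s, ∑ t ≤ b, Y s t * fU r (bidx h p a) (bidx h s t) ≡ 0 [SMOD Ichi n l h] :=
  SModEq.zero.mpr <| Submodule.sum_mem _ fun s _ => Submodule.sum_mem _ fun t ht =>
    Submodule.smul_mem _ _ <| SModEq.zero.mp <| (eU_fU_smodEq_of_le h r <| by
      have := Fin.le_def.mp (Finset.mem_Iic.mp ht)
      omega).2

lemma eU_succ_smodEq_sum (r : ℕ) {p q : Fin (n / l)} {a b : Fin l} (hab : a.val = b.val + r) :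
    eU (r + 1) (bidx h p a) (bidx h q b) ≡
      ∑ k : Fin (r + 1), Ue (bidx h p ⟨b.val + k.val, by have := k.isLt; have := a.isLt; omega⟩)
        (bidx h q ⟨b.val + k.val, by have := k.isLt; have := a.isLt; omega⟩) [SMOD Ichi n l h] := by
  induction r generalizing b with
  | zero =>
    obtain rfl : a = b := Fin.ext hab
    simp [eU, efU, kd]
  | succ r ih =>
    have hb : b.val + 1 < l := by omega
    have hi : bidx h p a ≠ bidx h q b := fun he => by
      have := congrArg Fin.val ((bidx_inj h).mp he).2
      omega
    calc eU (r + 1 + 1) (bidx h p a) (bidx h q b)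
        ≡ eU (r + 1) (bidx h p a) (bidx h q ⟨b.val + 1, hb⟩) +
          (∑ s, ∑ t ≤ b, Ue (bidx h s t) (bidx h q b) * eU (r + 1) (bidx h p a) (bidx h s t) +
            ∑ s, ∑ t ≤ b, Uf (bidx h s t) (bidx h q b) * fU (r + 1) (bidx h p a) (bidx h s t))
          [SMOD Ichi n l h] := by
          simpa only [Finset.sum_add_distrib] using eU_succ_smodEq h (r + 1) hb hi
      _ ≡ _ + (Ue (bidx h p b) (bidx h q b) + 0) [SMOD Ichi n l h] :=
          (ih (by simp; omega)).add ((sum_mul_eU_smodEq h (r + 1) _ hab).add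
            (sum_mul_fU_smodEq h (r + 1) _ hab.ge))
      _ = _ := by
        rw [add_zero, add_comm, Fin.sum_univ_succ (n := r + 1)]
        congr 1
        refine Finset.sum_congr rfl fun k _ => ?_
        congr 2 <;> ext <;> simp only [Fin.val_succ] <;> omega

lemma fU_succ_smodEq_sum (r : ℕ) {p q : Fin (n / l)} {a b : Fin l} (hab : a.val = b.val + r) :
    fU (r + 1) (bidx h p a) (bidx h q b) ≡
      ∑ k : Fin (r + 1), (-1 : ℂ) ^ k.val •
        Uf (bidx h p ⟨b.val + k.val, by have := k.isLt; have := a.isLt; omega⟩)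
          (bidx h q ⟨b.val + k.val, by have := k.isLt; have := a.isLt; omega⟩)
        [SMOD Ichi n l h] := by
  induction r generalizing b with
  | zero =>
    obtain rfl : a = b := Fin.ext hab
    simp [fU, efU, kd]
  | succ r ih =>
    have hb : b.val + 1 < l := by omega
    have hi : bidx h p a ≠ bidx h q b := fun he => by
      have := congrArg Fin.val ((bidx_inj h).mp he).2
      omega
    calc fU (r + 1 + 1) (bidx h p a) (bidx h q b)
        ≡ -fU (r + 1) (bidx h p a) (bidx h q ⟨b.val + 1, hb⟩) +
          (∑ s, ∑ t ≤ b, Uf (bidx h s t) (bidx h q b) * eU (r + 1) (bidx h p a) (bidx h s t) -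
            ∑ s, ∑ t ≤ b, Ue (bidx h s t) (bidx h q b) * fU (r + 1) (bidx h p a) (bidx h s t))
          [SMOD Ichi n l h] := by
          simpa only [Finset.sum_sub_distrib] using fU_succ_smodEq h (r + 1) hb hi
      _ ≡ -_ + (Uf (bidx h p b) (bidx h q b) - 0) [SMOD Ichi n l h] :=
          (ih (by simp; omega)).neg.add ((sum_mul_eU_smodEq h (r + 1) _ hab).sub
            (sum_mul_fU_smodEq h (r + 1) _ hab.ge))
      _ = _ := by
        rw [sub_zero, neg_add_eq_sub, sub_eq_add_neg, Fin.sum_univ_succ (n := r + 1)]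
        simp only [Fin.val_zero, pow_zero, one_smul, Fin.val_succ, neg_one_pow_succ_smul,
          Finset.sum_neg_distrib]
        congr 2
        refine Finset.sum_congr rfl fun k _ => ?_
        congr 3 <;> ext <;> simp only <;> omega

end Induction

/-- Let `l ∣ n`, `1 ≤ p,q ≤ n/l` and `1 ≤ m ≤ l`.  Then in
`U(Q(n))/I_χ`:
`π(e^{(m)}_{l(p-1)+m, l(q-1)+1}) = Σ_{k=1}^m π(e_{l(p-1)+k, l(q-1)+k})` and
`π(f^{(m)}_{l(p-1)+m, l(q-1)+1}) = Σ_{k=1}^m (-1)^{k-1} π(f_{l(p-1)+k, l(q-1)+k})`. -/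
theorem statement5 (n l : ℕ) (hl : 0 < l) (h : l ∣ n) (p q : Fin (n / l))
    (m : ℕ) (hm1 : 1 ≤ m) (hm2 : m ≤ l) :
    (piq n l h (eU m (bidx h p ⟨m - 1, by omega⟩) (bidx h q ⟨0, hl⟩)) =
      ∑ k : Fin m, piq n l h
        (Ue (bidx h p ⟨k.val, by have := k.isLt; omega⟩)
            (bidx h q ⟨k.val, by have := k.isLt; omega⟩))) ∧
    (piq n l h (fU m (bidx h p ⟨m - 1, by omega⟩) (bidx h q ⟨0, hl⟩)) =
      ∑ k : Fin m, ((-1 : ℂ) ^ k.val) • piq n l h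
        (Uf (bidx h p ⟨k.val, by have := k.isLt; omega⟩)
            (bidx h q ⟨k.val, by have := k.isLt; omega⟩))) := by
  obtain ⟨r, rfl⟩ : ∃ r, m = r + 1 := ⟨m - 1, by omega⟩
  have hab : (⟨r + 1 - 1, by omega⟩ : Fin l).val = (⟨0, hl⟩ : Fin l).val + r := by simp
  have he := eU_succ_smodEq_sum h r (p := p) (q := q) hab
  have hf := fU_succ_smodEq_sum h r (p := p) (q := q) hab
  simp only [zero_add] at he hf
  simp only [← map_smul, ← map_sum]
  exact ⟨(SModEq.restrictScalars ℂ).mpr he, (SModEq.restrictScalars ℂ).mpr hf⟩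
end
end

section
/- Let l divide n, 1 ≤ p,q ≤ n/l, and 0 ≤ k ≤ l−1. Then P(π(e_{lp, l(q−1)+1}^{(l+k)})) = Σ_{i=1}^{l−k} e_{l(p−1)+i, l(q−1)+i+k} and P(π(f_{lp, l(q−1)+1}^{(l+k)})) = Σ_{i=1}^{l−k} (−1)^{i+k−1} f_{l(p−1)+i, l(q−1)+i+k}. -/
noncomputable section
open scoped Classical

set_option linter.unusedVariables false

namespace St6

variable {n l : ℕ}

/-- Unified generator: `gen false = Ue`, `gen true = Uf`. -/
def gen (t : Bool) (i j : Fin n) : UQ n := if t then Uf i j else Ue i j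

lemma hee (i j k m : Fin n) :
    Ue i j * Ue k m - Ue k m * Ue i j = kd j k • Ue i m - kd m i • Ue k j := by
  have := RingQuot.mkAlgHom_rel ℂ (QRel.ee (n := n) i j k m)
  simpa [Ue, map_sub, map_mul, map_smul] using this

lemma hef (i j k m : Fin n) :
    Ue i j * Uf k m - Uf k m * Ue i j = kd j k • Uf i m - kd m i • Uf k j := by
  have := RingQuot.mkAlgHom_rel ℂ (QRel.ef (n := n) i j k m)
  simpa [Ue, Uf, map_sub, map_mul, map_smul] using this

lemma hff (i j k m : Fin n) :
    Uf i j * Uf k m + Uf k m * Uf i j = kd j k • Ue i m + kd m i • Ue k j := by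
  have := RingQuot.mkAlgHom_rel ℂ (QRel.ff (n := n) i j k m)
  simpa [Ue, Uf, map_add, map_mul, map_smul] using this

/-- Unified super-commutation. -/
lemma gen_comm (t u : Bool) (i j k m : Fin n) :
    gen t i j * gen u k m
      = (if t && u then (-1:ℂ) else 1) • (gen u k m * gen t i j)
        + kd j k • gen (xor t u) i m
        + (if t && u then (1:ℂ) else -1) • kd m i • gen (xor t u) k j := by
  cases t <;> cases u <;> simp only [gen, Bool.and_self, Bool.false_and, Bool.true_and,
      Bool.and_false, Bool.xor_false, Bool.xor_true, Bool.false_xor, Bool.true_xor,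
      Bool.not_false, Bool.not_true, if_true, if_false, one_smul, neg_one_smul,
      Bool.false_eq_true, Bool.true_eq_false]
  · have := hee i j k m; rw [sub_eq_iff_eq_add] at this; rw [this]; module
  · have := hef i j k m; rw [sub_eq_iff_eq_add] at this; rw [this]; module
  · have := hef k m i j; rw [sub_eq_iff_eq_add] at this; rw [this]; module
  · have := eq_sub_of_add_eq (hff i j k m); rw [this]; module

end St6
namespace St6

section
variable {n l : ℕ} (hl : 0 < l) (h : l ∣ n)

lemma bidx_val (p : Fin (n/l)) (a : Fin l) : (bidx h p a).val = l * p.val + a.val := rfl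

lemma bidx_inj {p q₁ : Fin (n/l)} {a b : Fin l} :
    bidx h p a = bidx h q₁ b ↔ p = q₁ ∧ a = b := by
  constructor
  · intro he
    have hv : l * p.val + a.val = l * q₁.val + b.val := congrArg Fin.val he
    have ha : a.val < l := a.isLt
    have hb : b.val < l := b.isLt
    have hp : p.val = q₁.val := by
      have h1 : (l * p.val + a.val) / l = p.val := by
        rw [Nat.mul_add_div (by omega), Nat.div_eq_of_lt ha, Nat.add_zero]
      have h2 : (l * q₁.val + b.val) / l = q₁.val := by
        rw [Nat.mul_add_div (by omega), Nat.div_eq_of_lt hb, Nat.add_zero]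
      rw [← h1, ← h2, hv]
    rw [hp] at hv
    refine ⟨Fin.ext hp, Fin.ext ?_⟩
    omega
  · rintro ⟨rfl, rfl⟩; rfl

/-- `Ichi` is a left ideal. -/
lemma Ichi_mul_left {x : UQ n} (u : UQ n) (hx : x ∈ Ichi n l h) : u * x ∈ Ichi n l h := by
  simpa [smul_eq_mul] using Submodule.smul_mem (Ichi n l h) u hx

/-- Right reduction modulo `I_χ`. -/
lemma mul_gen_mem (u : UQ n) (t : Bool) (p₁ q₁ : Fin (n/l)) (r c : Fin l)
    (hrc : c.val < r.val) :
    u * gen t (bidx h p₁ r) (bidx h q₁ c)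
      - (if t = false ∧ r.val = c.val + 1 ∧ p₁ = q₁ then (1:ℂ) else 0) • u
      ∈ Ichi n l h := by
  cases t
  · have hx : (Ue (bidx h p₁ r) (bidx h q₁ c) -
        algebraMap ℂ (UQ n) (if r.val = c.val + 1 ∧ p₁ = q₁ then 1 else 0)) ∈ mSet n l h :=
      ⟨p₁, q₁, r, c, hrc, Or.inl rfl⟩
    have hm := Submodule.smul_mem (Ichi n l h) u (Submodule.subset_span hx)
    rw [smul_eq_mul, mul_sub] at hm
    have : u * algebraMap ℂ (UQ n) (if r.val = c.val + 1 ∧ p₁ = q₁ then 1 else 0)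
        = (if r.val = c.val + 1 ∧ p₁ = q₁ then (1:ℂ) else 0) • u := by
      rw [← Algebra.commutes, ← Algebra.smul_def]
    rw [this] at hm
    simpa [gen] using hm
  · have hx : (Uf (bidx h p₁ r) (bidx h q₁ c)) ∈ mSet n l h :=
      ⟨p₁, q₁, r, c, hrc, Or.inr rfl⟩
    have hm := Submodule.smul_mem (Ichi n l h) u (Submodule.subset_span hx)
    rw [smul_eq_mul] at hm
    simpa [gen] using hm

lemma sum_blocks {M : Type*} [AddCommMonoid M] (F : Fin n → M) :
    ∑ k : Fin n, F k = ∑ s : Fin (n/l), ∑ b : Fin l, F (bidx h s b) := by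
  have hb : Function.Bijective (fun x : Fin (n/l) × Fin l => bidx h x.1 x.2) := by
    rw [Fintype.bijective_iff_injective_and_card]
    constructor
    · intro x y hxy
      obtain ⟨h1, h2⟩ := (bidx_inj h).1 hxy
      exact Prod.ext h1 h2
    · simp [Nat.div_mul_cancel h]
  calc ∑ k : Fin n, F k
      = ∑ x : Fin (n/l) × Fin l, F (bidx h x.1 x.2) :=
        (Fintype.sum_bijective _ hb _ _ (fun x => rfl)).symm
    _ = ∑ s : Fin (n/l), ∑ b : Fin l, F (bidx h s b) := Fintype.sum_prod_type _

end
end St6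
namespace St6

section
variable {n l : ℕ}

abbrev Desc (n l : ℕ) := Bool × Fin (n / l) × Fin (n / l) × Fin l × Fin l

def degL {n l : ℕ} (L : List (Desc n l)) : ℕ := (L.map pgDeg).sum
def wtL {n l : ℕ} (L : List (Desc n l)) : ℕ := (L.map pgWt).sum
def wfL {n l : ℕ} (L : List (Desc n l)) : Prop :=
  ∀ d ∈ L, d.2.2.2.1.val ≤ d.2.2.2.2.val

@[simp] lemma degL_nil : degL ([] : List (Desc n l)) = 0 := rfl
@[simp] lemma wtL_nil : wtL ([] : List (Desc n l)) = 0 := rfl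
@[simp] lemma degL_cons (d : Desc n l) (L : List (Desc n l)) :
    degL (d :: L) = pgDeg d + degL L := by simp [degL]
@[simp] lemma wtL_cons (d : Desc n l) (L : List (Desc n l)) :
    wtL (d :: L) = pgWt d + wtL L := by simp [wtL]

lemma pgElem_eq_gen (h : l ∣ n) (d : Desc n l) :
    pgElem h d = gen d.1 (bidx h d.2.1 d.2.2.2.1) (bidx h d.2.2.1 d.2.2.2.2) := by
  obtain ⟨u, pd, qd, rd, cd⟩ := d
  cases u <;> rfl

variable (h : l ∣ n)

def MSet (D W sD sW : ℕ) : Set (UQ n) :=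
  {x | ∃ L : List (Desc n l), wfL L ∧ x = (L.map (pgElem h)).prod ∧
    degL L + sD ≤ D ∧ wtL L + sW ≤ W}

def MSp (D W sD sW : ℕ) : Submodule ℂ (UQ n) := Submodule.span ℂ (MSet h D W sD sW)

lemma MSp_mono {D W sD sW D' W' sD' sW' : ℕ}
    (hD : D + sD' ≤ D' + sD) (hW : W + sW' ≤ W' + sW) :
    MSp h D W sD sW ≤ MSp h D' W' sD' sW' := by
  apply Submodule.span_mono
  rintro x ⟨L, hw, rfl, h1, h2⟩
  exact ⟨L, hw, rfl, by omega, by omega⟩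

/-- notation for the scalar-restricted ideal -/
def IchiC : Submodule ℂ (UQ n) := (Ichi n l h).restrictScalars ℂ

lemma mem_IchiC {x : UQ n} : x ∈ IchiC h ↔ x ∈ Ichi n l h := Iff.rfl

lemma IchiC_mul_left {x : UQ n} (u : UQ n) (hx : x ∈ IchiC h) : u * x ∈ IchiC h :=
  Ichi_mul_left h u hx

lemma mul_MSp {D W sD sW : ℕ} (d : Desc n l) (hd : d.2.2.2.1.val ≤ d.2.2.2.2.val)
    {x : UQ n} (hx : x ∈ MSp h D W sD sW) :
    pgElem h d * x ∈ MSp h (D + pgDeg d) (W + pgWt d) sD sW := by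
  induction hx using Submodule.span_induction with
  | mem y hy =>
    obtain ⟨L, hw, rfl, h1, h2⟩ := hy
    refine Submodule.subset_span ⟨d :: L, ?_, ?_, by simp; omega, by simp; omega⟩
    · intro e he
      rcases List.mem_cons.1 he with rfl | he
      · exact hd
      · exact hw e he
    · simp
  | zero => simp
  | add y z _ _ hy hz => rw [mul_add]; exact add_mem hy hz
  | smul c y _ hy => rw [mul_smul_comm]; exact Submodule.smul_mem _ c hy

lemma mul_sup_MSp {D W sD sW : ℕ} (d : Desc n l) (hd : d.2.2.2.1.val ≤ d.2.2.2.2.val)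
    {x : UQ n} (hx : x ∈ IchiC h ⊔ MSp h D W sD sW) :
    pgElem h d * x ∈ IchiC h ⊔ MSp h (D + pgDeg d) (W + pgWt d) sD sW := by
  obtain ⟨y, hy, z, hz, rfl⟩ := Submodule.mem_sup.1 hx
  rw [mul_add]
  exact add_mem (Submodule.mem_sup_left (IchiC_mul_left h _ hy))
    (Submodule.mem_sup_right (mul_MSp h d hd hz))

/-- The straightening lemma. -/
lemma str (L : List (Desc n l)) (hwf : wfL L) :
    ∀ (t : Bool) (p₁ q₁ : Fin (n/l)) (r c : Fin l), c.val < r.val →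
    gen t (bidx h p₁ r) (bidx h q₁ c) * (L.map (pgElem h)).prod
      ∈ IchiC h ⊔ MSp h (degL L + 2 + 2*c.val) (wtL L + 2 + 2*c.val) (2*r.val) (2*r.val) := by
  induction L with
  | nil =>
    intro t p₁ q₁ r c hrc
    simp only [List.map_nil, List.prod_nil, mul_one, degL_nil, wtL_nil, Nat.zero_add]
    have hI := mul_gen_mem h 1 t p₁ q₁ r c hrc
    rw [one_mul] at hI
    have : gen t (bidx h p₁ r) (bidx h q₁ c)
        = (gen t (bidx h p₁ r) (bidx h q₁ c)
            - (if t = false ∧ r.val = c.val + 1 ∧ p₁ = q₁ then (1:ℂ) else 0) • 1)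
          + (if t = false ∧ r.val = c.val + 1 ∧ p₁ = q₁ then (1:ℂ) else 0) • 1 := by abel
    rw [this]
    refine add_mem (Submodule.mem_sup_left hI) (Submodule.mem_sup_right ?_)
    by_cases hc : t = false ∧ r.val = c.val + 1 ∧ p₁ = q₁
    · rw [if_pos hc]
      refine Submodule.smul_mem _ _ (Submodule.subset_span ?_)
      exact ⟨[], fun d hd => absurd hd List.not_mem_nil, by simp,
        by simp; omega, by simp; omega⟩
    · rw [if_neg hc, zero_smul]; exact zero_mem _
  | cons d L' ih =>
    intro t p₁ q₁ r c hrc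
    obtain ⟨u, pd, qd, rd, cd⟩ := d
    have hd : rd.val ≤ cd.val := hwf _ List.mem_cons_self
    have hwf' : wfL L' := fun e he => hwf e (List.mem_cons_of_mem _ he)
    have ih' := ih hwf'
    set R := bidx h p₁ r with hR
    set C := bidx h q₁ c with hC
    set P := (L'.map (pgElem h)).prod with hP
    have hunf : ((((u, pd, qd, rd, cd) : Desc n l) :: L').map (pgElem h)).prod
        = gen u (bidx h pd rd) (bidx h qd cd) * P := by
      show ((pgElem h (u, pd, qd, rd, cd)) :: L'.map (pgElem h)).prod = _
      rw [List.prod_cons, pgElem_eq_gen]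
    rw [hunf, ← mul_assoc, gen_comm t u]
    rw [add_mul, add_mul, smul_mul_assoc, smul_mul_assoc, smul_mul_assoc, smul_mul_assoc,
      mul_assoc]
    refine add_mem (add_mem ?_ ?_) ?_
    · apply Submodule.smul_mem
      have h1 := ih' t p₁ q₁ r c hrc
      have h2 := mul_sup_MSp h (u, pd, qd, rd, cd) hd h1
      rw [pgElem_eq_gen] at h2
      refine (sup_le_sup_left (MSp_mono h ?_ ?_) _) h2
      · simp only [degL_cons, pgDeg]; omega
      · simp only [wtL_cons, pgWt]; omega
    · by_cases hkd : C = bidx h pd rd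
      · simp only [kd, if_pos hkd, one_smul]
        obtain ⟨hq, hcrd⟩ := (bidx_inj h).1 (hC ▸ hkd)
        have hcv : c.val = rd.val := congrArg Fin.val hcrd
        by_cases hrc2 : r.val ≤ cd.val
        · refine Submodule.mem_sup_right (Submodule.subset_span ?_)
          refine ⟨(xor t u, p₁, qd, r, cd) :: L', ?_, ?_, ?_, ?_⟩
          · intro e he
            rcases List.mem_cons.1 he with rfl | he
            · exact hrc2
            · exact hwf' e he
          · show _ = (pgElem h ((xor t u, p₁, qd, r, cd) : Desc n l) :: L'.map (pgElem h)).prod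
            rw [List.prod_cons, pgElem_eq_gen]
          · simp only [degL_cons, pgDeg]; omega
          · simp only [wtL_cons, pgWt]; omega
        · have h1 := ih' (xor t u) p₁ qd r cd (by omega)
          refine (sup_le_sup_left (MSp_mono h ?_ ?_) _) h1
          · simp only [degL_cons, pgDeg]; omega
          · simp only [wtL_cons, pgWt]; omega
      · simp only [kd, if_neg hkd, zero_smul]; exact zero_mem _
    · apply Submodule.smul_mem
      by_cases hkd : bidx h qd cd = R
      · simp only [kd, if_pos hkd, one_smul]
        obtain ⟨hq, hcdr⟩ := (bidx_inj h).1 (hkd.trans hR)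
        have hcv : cd.val = r.val := congrArg Fin.val hcdr
        by_cases hrc2 : rd.val ≤ c.val
        · refine Submodule.mem_sup_right (Submodule.subset_span ?_)
          refine ⟨(xor t u, pd, q₁, rd, c) :: L', ?_, ?_, ?_, ?_⟩
          · intro e he
            rcases List.mem_cons.1 he with rfl | he
            · exact hrc2
            · exact hwf' e he
          · show _ = (pgElem h ((xor t u, pd, q₁, rd, c) : Desc n l) :: L'.map (pgElem h)).prod
            rw [List.prod_cons, pgElem_eq_gen]
          · simp only [degL_cons, pgDeg]; omega
          · simp only [wtL_cons, pgWt]; omega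
        · have h1 := ih' (xor t u) pd q₁ rd c (by omega)
          refine (sup_le_sup_left (MSp_mono h ?_ ?_) _) h1
          · simp only [degL_cons, pgDeg]; omega
          · simp only [wtL_cons, pgWt]; omega
      · simp only [kd, if_neg hkd, zero_smul]; exact zero_mem _
end
end St6
namespace St6
section
variable {n l : ℕ} (h : l ∣ n)

def ErrSet (M A : ℕ) : Set (UQ n) :=
  {x | ∃ L : List (Desc n l), wfL L ∧ x = (L.map (pgElem h)).prod ∧
    (degL L + 2*A + 2 ≤ 2*M ∨ (degL L + 2*A ≤ 2*M ∧ wtL L + 2*A + 4 ≤ 2*M))}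

def Err (M A : ℕ) : Submodule ℂ (UQ n) := Submodule.span ℂ (ErrSet h M A)

def NN (M A : ℕ) : Submodule ℂ (UQ n) := IchiC h ⊔ Err h M A

lemma nil_mem_Err {M A : ℕ} (hAM : A + 1 ≤ M) : (1 : UQ n) ∈ Err h M A :=
  Submodule.subset_span ⟨[], fun d hd => absurd hd List.not_mem_nil, by simp,
    by simp; omega⟩

/-- membership of a single generator in `NN`. -/
lemma gen_mem_N (t : Bool) (p₁ q₁ : Fin (n/l)) (r c : Fin l) (M A : ℕ)
    (H1 : c.val + A + 2 ≤ M + r.val)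
    (hsc : t = false → r.val = c.val + 1 → p₁ = q₁ → A + 1 ≤ M) :
    gen t (bidx h p₁ r) (bidx h q₁ c) ∈ NN h M A := by
  rcases le_or_gt r.val c.val with hrc | hrc
  · refine Submodule.mem_sup_right (Submodule.subset_span ?_)
    refine ⟨[(t, p₁, q₁, r, c)], ?_, by simp [pgElem_eq_gen], Or.inl ?_⟩
    · intro e he
      rcases List.mem_cons.1 he with rfl | he
      · exact hrc
      · exact absurd he List.not_mem_nil
    · simp only [degL_cons, degL_nil, pgDeg]; omega
  · have hI := mul_gen_mem h 1 t p₁ q₁ r c hrc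
    rw [one_mul] at hI
    have heq : gen t (bidx h p₁ r) (bidx h q₁ c)
        = (gen t (bidx h p₁ r) (bidx h q₁ c)
            - (if t = false ∧ r.val = c.val + 1 ∧ p₁ = q₁ then (1:ℂ) else 0) • 1)
          + (if t = false ∧ r.val = c.val + 1 ∧ p₁ = q₁ then (1:ℂ) else 0) • 1 := by abel
    rw [heq]
    refine add_mem (Submodule.mem_sup_left hI) (Submodule.mem_sup_right ?_)
    by_cases hc : t = false ∧ r.val = c.val + 1 ∧ p₁ = q₁
    · rw [if_pos hc]
      exact Submodule.smul_mem _ _ (nil_mem_Err h (hsc hc.1 hc.2.1 hc.2.2))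
    · rw [if_neg hc, zero_smul]; exact zero_mem _

/-- membership of a product of two generators in `Err`. -/
lemma pair_mem_Err (t u : Bool) (pa qa pb qb : Fin (n/l)) (r c r' c' : Fin l) (M A : ℕ)
    (h1 : r.val ≤ c.val) (h2 : r'.val ≤ c'.val)
    (HD : 2*c.val + 2*c'.val + 2*A + 4 ≤ 2*M + 2*r.val + 2*r'.val) :
    gen t (bidx h pa r) (bidx h qa c) * gen u (bidx h pb r') (bidx h qb c') ∈ Err h M A := by
  refine Submodule.subset_span ⟨[(t, pa, qa, r, c), (u, pb, qb, r', c')], ?_, ?_, Or.inr ⟨?_, ?_⟩⟩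
  · intro e he
    rcases List.mem_cons.1 he with rfl | he
    · exact h1
    rcases List.mem_cons.1 he with rfl | he
    · exact h2
    · exact absurd he List.not_mem_nil
  · simp [pgElem_eq_gen]
  · simp only [degL_cons, degL_nil, pgDeg]; omega
  · simp only [wtL_cons, wtL_nil, pgWt]; omega

/-- Pushing a generator through `NN m b` lands in `NN (m+1) a`. -/
lemma errpush (t' : Bool) (pp s : Fin (n/l)) (a b : Fin l) (m : ℕ) {x : UQ n}
    (hx : x ∈ NN h m b.val) :
    gen t' (bidx h pp a) (bidx h s b) * x ∈ NN h (m+1) a.val := by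
  obtain ⟨y, hy, z, hz, rfl⟩ := Submodule.mem_sup.1 hx
  rw [mul_add]
  refine add_mem (Submodule.mem_sup_left (IchiC_mul_left h _ hy)) ?_
  clear hx
  induction hz using Submodule.span_induction with
  | zero => simp
  | add y1 z1 _ _ hy1 hz1 => rw [mul_add]; exact add_mem hy1 hz1
  | smul c1 y1 _ hy1 => rw [mul_smul_comm]; exact Submodule.smul_mem _ c1 hy1
  | mem w hw =>
    obtain ⟨L, hwfl, rfl, hcond⟩ := hw
    rcases le_or_gt a.val b.val with hab | hab
    · refine Submodule.mem_sup_right ?_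
      have hmem : pgElem h ((t', pp, s, a, b) : Desc n l) * (L.map (pgElem h)).prod
          ∈ Err h (m+1) a.val := by
        refine Submodule.subset_span ⟨(t', pp, s, a, b) :: L, ?_, by rw [List.map_cons, List.prod_cons], ?_⟩
        · intro e he
          rcases List.mem_cons.1 he with rfl | he
          · exact hab
          · exact hwfl e he
        · rcases hcond with h1 | ⟨h1, h2⟩
          · left; simp only [degL_cons, pgDeg]; omega
          · right
            constructor
            · simp only [degL_cons, pgDeg]; omega
            · simp only [wtL_cons, pgWt]; omega
      rw [pgElem_eq_gen] at hmem
      exact hmem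
    · have hstr := str h L hwfl t' pp s a b hab
      have hle : MSp h (degL L + 2 + 2*b.val) (wtL L + 2 + 2*b.val) (2*a.val) (2*a.val)
          ≤ Err h (m+1) a.val := by
        refine Submodule.span_le.2 ?_
        rintro x ⟨L'', hw'', rfl, hd'', hw2''⟩
        refine Submodule.subset_span ⟨L'', hw'', rfl, ?_⟩
        rcases hcond with h1 | ⟨h1, h2⟩
        · left; omega
        · right; omega
      exact (sup_le_sup_left hle _) hstr
end
end St6
namespace St6
section
variable {n l : ℕ} (hl : 0 < l) (h : l ∣ n) (q : Fin (n / l))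

/-- Unified Sergeev elements. -/
def gU (t : Bool) (m : ℕ) (i j : Fin n) : UQ n := if t then fU m i j else eU m i j

lemma gU_succ (t : Bool) (m : ℕ) (i j : Fin n) :
    gU t (m+1) i j = (∑ k, Ue i k * gU t m k j)
      + (-1:ℂ)^m • ∑ k, Uf i k * gU (!t) m k j := by
  cases t <;> rfl

lemma gU_zero (t : Bool) (i j : Fin n) :
    gU t 0 i j = if t then 0 else algebraMap ℂ (UQ n) (kd i j) := by
  cases t <;> rfl

/-- The leading terms. -/
def LeadG (t : Bool) (m : ℕ) (s : Fin (n/l)) (b : Fin l) : UQ n :=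
  if m ≤ b.val then
    (if t then 0 else algebraMap ℂ (UQ n) (if m = b.val ∧ s = q then 1 else 0))
  else ∑ i' : Fin l, ∑ jj : Fin l,
    (if i'.val ≤ b.val ∧ jj.val + b.val + 1 = i'.val + m then
       (if t then (-1:ℂ)^(i'.val + m + b.val + 1) else 1) else 0) •
      gen t (bidx h s i') (bidx h q jj)

lemma neg_one_pow_congr {a b : ℕ} (hab : a % 2 = b % 2) : ((-1:ℂ))^a = (-1)^b := by
  conv_lhs => rw [← Nat.div_add_mod a 2]
  conv_rhs => rw [← Nat.div_add_mod b 2]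
  rw [pow_add, pow_add, pow_mul, pow_mul, hab]
  norm_num

lemma sum_delta_fin {α : Type*} [Fintype α] [DecidableEq α] {M : Type*} [AddCommMonoid M]
    (c : α) (F : α → M) : (∑ x : α, if x = c then F x else 0) = F c := by
  simp

lemma sum_delta_val {M : Type*} [AddCommMonoid M] (v : ℕ) (F : Fin l → M) :
    (∑ b : Fin l, if b.val = v then F b else 0) = if hv : v < l then F ⟨v, hv⟩ else 0 := by
  split_ifs with hv
  · rw [← sum_delta_fin (⟨v, hv⟩ : Fin l) F]
    refine Finset.sum_congr rfl fun b _ => ?_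
    refine if_congr ⟨fun hb => Fin.ext hb, fun hb => congrArg Fin.val hb⟩ rfl rfl
  · refine Finset.sum_eq_zero fun b _ => ?_
    rw [if_neg]
    have := b.isLt
    omega

end
end St6
namespace St6
section
variable {n l : ℕ} (h : l ∣ n) (q : Fin (n / l))

lemma M1core (t : Bool) (m : ℕ) (p' s : Fin (n/l)) (a b : Fin l) :
    Ue (bidx h p' a) (bidx h s b) * LeadG h q t m s b
      - ((if t = false ∧ b.val = m ∧ s = q then (1:ℂ) else 0) •
            Ue (bidx h p' a) (bidx h s b)
         + (if b.val + 1 = a.val ∧ s = p' ∧ b.val < m then (1:ℂ) else 0) •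
            LeadG h q t m s b)
      ∈ NN h (m+1) a.val := by
  rcases le_or_gt m b.val with hmb | hmb
  · -- zone A
    rw [LeadG, if_pos hmb,
      if_neg (by rintro ⟨h1, h2, h3⟩; omega :
        ¬(b.val + 1 = a.val ∧ s = p' ∧ b.val < m)), zero_smul, add_zero]
    cases t
    · rw [show (if (false : Bool) then (0 : UQ n) else
          algebraMap ℂ (UQ n) (if m = b.val ∧ s = q then 1 else 0))
          = algebraMap ℂ (UQ n) (if m = b.val ∧ s = q then 1 else 0) from rfl]
      rw [← Algebra.commutes, ← Algebra.smul_def]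
      by_cases hc : b.val = m ∧ s = q
      · rw [if_pos ⟨hc.1.symm, hc.2⟩, if_pos ⟨rfl, hc⟩, sub_self]
        exact zero_mem _
      · rw [if_neg (by rintro ⟨h1, h2⟩; exact hc ⟨h1.symm, h2⟩),
          if_neg (by rintro ⟨h1, h2⟩; exact hc h2), sub_self]
        exact zero_mem _
    · rw [show (if (true : Bool) then (0 : UQ n) else
          algebraMap ℂ (UQ n) (if m = b.val ∧ s = q then 1 else 0)) = 0 from rfl,
        mul_zero, if_neg (by rintro ⟨h1, h2⟩; exact absurd h1 (by decide)), zero_smul,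
        sub_zero]
      exact zero_mem _
  · -- zone B
    rw [LeadG, if_neg (by omega),
      if_neg (by rintro ⟨h1, h2, h3⟩; omega : ¬(t = false ∧ b.val = m ∧ s = q)),
      zero_smul, zero_add]
    rw [Finset.mul_sum, Finset.smul_sum, ← Finset.sum_sub_distrib]
    refine Submodule.sum_mem _ fun i' _ => ?_
    rw [Finset.mul_sum, Finset.smul_sum, ← Finset.sum_sub_distrib]
    refine Submodule.sum_mem _ fun jj _ => ?_
    by_cases hind : i'.val ≤ b.val ∧ jj.val + b.val + 1 = i'.val + m
    swap
    · rw [if_neg hind, zero_smul, mul_zero, smul_zero, sub_zero]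
      exact zero_mem _
    rw [if_pos hind]
    have hcore : Ue (bidx h p' a) (bidx h s b) * gen t (bidx h s i') (bidx h q jj)
        - (if b.val + 1 = a.val ∧ s = p' ∧ b.val < m then (1:ℂ) else 0) •
            gen t (bidx h s i') (bidx h q jj)
        ∈ NN h (m+1) a.val := by
      rcases le_or_gt a.val b.val with hab | hab
      · rw [if_neg (by rintro ⟨h1, h2, h3⟩; omega), zero_smul, sub_zero]
        exact Submodule.mem_sup_right
          (pair_mem_Err h false t p' s s q a b i' jj (m+1) a.val hab (by omega) (by omega))
      · rw [show Ue (bidx h p' a) (bidx h s b)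
            = gen false (bidx h p' a) (bidx h s b) from rfl, gen_comm false t]
        simp only [Bool.false_and, Bool.false_xor, Bool.false_eq_true, if_false, one_smul]
        have hI := mul_gen_mem h (gen t (bidx h s i') (bidx h q jj)) false p' s a b hab
        have hco : (if (false : Bool) = false ∧ a.val = b.val + 1 ∧ p' = s then (1:ℂ) else 0)
            = (if b.val + 1 = a.val ∧ s = p' ∧ b.val < m then (1:ℂ) else 0) := by
          by_cases hc : a.val = b.val + 1 ∧ p' = s
          · rw [if_pos ⟨rfl, hc⟩, if_pos ⟨hc.1.symm, hc.2.symm, by omega⟩]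
          · rw [if_neg (by rintro ⟨h1, h2⟩; exact hc h2),
              if_neg (by rintro ⟨h1, h2, h3⟩; exact hc ⟨h1.symm, h2.symm⟩)]
        rw [hco] at hI
        have heq : gen t (bidx h s i') (bidx h q jj) * gen false (bidx h p' a) (bidx h s b)
              + kd (bidx h s b) (bidx h s i') • gen t (bidx h p' a) (bidx h q jj)
              + (-1:ℂ) • kd (bidx h q jj) (bidx h p' a) • gen t (bidx h s i') (bidx h s b)
              - (if b.val + 1 = a.val ∧ s = p' ∧ b.val < m then (1:ℂ) else 0) •
                  gen t (bidx h s i') (bidx h q jj)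
            = (gen t (bidx h s i') (bidx h q jj) * gen false (bidx h p' a) (bidx h s b)
                - (if b.val + 1 = a.val ∧ s = p' ∧ b.val < m then (1:ℂ) else 0) •
                    gen t (bidx h s i') (bidx h q jj))
              + kd (bidx h s b) (bidx h s i') • gen t (bidx h p' a) (bidx h q jj)
              + (-1:ℂ) • kd (bidx h q jj) (bidx h p' a) • gen t (bidx h s i') (bidx h s b) := by
          abel
        rw [heq]
        refine add_mem (add_mem (Submodule.mem_sup_left hI) ?_) (Submodule.smul_mem _ _ ?_)
        · by_cases hkd : bidx h s b = bidx h s i'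
          · simp only [kd, if_pos hkd, one_smul]
            have hbv : b.val = i'.val := congrArg Fin.val ((bidx_inj h).1 hkd).2
            exact gen_mem_N h t p' q a jj (m+1) a.val (by omega) (fun _ h2 _ => by omega)
          · simp only [kd, if_neg hkd, zero_smul]; exact zero_mem _
        · by_cases hkd : bidx h q jj = bidx h p' a
          · simp only [kd, if_pos hkd, one_smul]
            have hjv : jj.val = a.val := congrArg Fin.val ((bidx_inj h).1 hkd).2
            exact gen_mem_N h t s s i' b (m+1) a.val (by omega) (fun _ h2 _ => by omega)
          · simp only [kd, if_neg hkd, zero_smul]; exact zero_mem _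
    have heq2 : Ue (bidx h p' a) (bidx h s b) *
          ((if t then (-1:ℂ)^(i'.val + m + b.val + 1) else 1) •
            gen t (bidx h s i') (bidx h q jj))
        - (if b.val + 1 = a.val ∧ s = p' ∧ b.val < m then (1:ℂ) else 0) •
            ((if t then (-1:ℂ)^(i'.val + m + b.val + 1) else 1) •
              gen t (bidx h s i') (bidx h q jj))
        = (if t then (-1:ℂ)^(i'.val + m + b.val + 1) else 1) •
            (Ue (bidx h p' a) (bidx h s b) * gen t (bidx h s i') (bidx h q jj)
              - (if b.val + 1 = a.val ∧ s = p' ∧ b.val < m then (1:ℂ) else 0) •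
                  gen t (bidx h s i') (bidx h q jj)) := by
      rw [mul_smul_comm]
      module
    rw [heq2]
    exact Submodule.smul_mem _ _ hcore
end
end St6
namespace St6
section
variable {n l : ℕ} (h : l ∣ n) (q : Fin (n / l))

lemma M2core (t : Bool) (m : ℕ) (p' s : Fin (n/l)) (a b : Fin l) :
    Uf (bidx h p' a) (bidx h s b) * LeadG h q (!t) m s b
      - (if t = true ∧ b.val = m ∧ s = q then (1:ℂ) else 0) •
          Uf (bidx h p' a) (bidx h s b)
      ∈ NN h (m+1) a.val := by
  rcases le_or_gt m b.val with hmb | hmb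
  · -- zone A
    rw [LeadG, if_pos hmb]
    cases t
    · rw [show ((if !(false : Bool) then (0 : UQ n) else
          algebraMap ℂ (UQ n) (if m = b.val ∧ s = q then 1 else 0))) = 0 from rfl,
        mul_zero, if_neg (by rintro ⟨h1, h2⟩; exact absurd h1 (by decide)), zero_smul,
        sub_zero]
      exact zero_mem _
    · rw [show ((if !(true : Bool) then (0 : UQ n) else
          algebraMap ℂ (UQ n) (if m = b.val ∧ s = q then 1 else 0)))
          = algebraMap ℂ (UQ n) (if m = b.val ∧ s = q then 1 else 0) from rfl]
      rw [← Algebra.commutes, ← Algebra.smul_def]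
      by_cases hc : b.val = m ∧ s = q
      · rw [if_pos ⟨hc.1.symm, hc.2⟩, if_pos ⟨rfl, hc⟩, sub_self]
        exact zero_mem _
      · rw [if_neg (by rintro ⟨h1, h2⟩; exact hc ⟨h1.symm, h2⟩),
          if_neg (by rintro ⟨h1, h2⟩; exact hc h2), sub_self]
        exact zero_mem _
  · -- zone B
    rw [LeadG, if_neg (by omega),
      if_neg (by rintro ⟨h1, h2, h3⟩; omega : ¬(t = true ∧ b.val = m ∧ s = q)),
      zero_smul, sub_zero, Finset.mul_sum]
    refine Submodule.sum_mem _ fun i' _ => ?_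
    rw [Finset.mul_sum]
    refine Submodule.sum_mem _ fun jj _ => ?_
    by_cases hind : i'.val ≤ b.val ∧ jj.val + b.val + 1 = i'.val + m
    swap
    · rw [if_neg hind, zero_smul, mul_zero]
      exact zero_mem _
    rw [if_pos hind, mul_smul_comm]
    refine Submodule.smul_mem _ _ ?_
    rcases le_or_gt a.val b.val with hab | hab
    · exact Submodule.mem_sup_right
        (pair_mem_Err h true (!t) p' s s q a b i' jj (m+1) a.val hab (by omega) (by omega))
    · rw [show Uf (bidx h p' a) (bidx h s b)
          = gen true (bidx h p' a) (bidx h s b) from rfl, gen_comm true (!t)]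
      simp only [Bool.true_xor, Bool.not_not]
      have hI := mul_gen_mem h (gen (!t) (bidx h s i') (bidx h q jj)) true p' s a b hab
      rw [if_neg (by rintro ⟨h1, h2⟩; exact absurd h1 (by decide)), zero_smul, sub_zero]
        at hI
      refine add_mem (add_mem (Submodule.smul_mem _ _ (Submodule.mem_sup_left hI)) ?_)
        (Submodule.smul_mem _ _ ?_)
      · by_cases hkd : bidx h s b = bidx h s i'
        · simp only [kd, if_pos hkd, one_smul]
          have hbv : b.val = i'.val := congrArg Fin.val ((bidx_inj h).1 hkd).2
          exact gen_mem_N h t p' q a jj (m+1) a.val (by omega) (fun _ h2 _ => by omega)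
        · simp only [kd, if_neg hkd, zero_smul]; exact zero_mem _
      · by_cases hkd : bidx h q jj = bidx h p' a
        · simp only [kd, if_pos hkd, one_smul]
          have hjv : jj.val = a.val := congrArg Fin.val ((bidx_inj h).1 hkd).2
          exact gen_mem_N h t s s i' b (m+1) a.val (by omega) (fun _ h2 _ => by omega)
        · simp only [kd, if_neg hkd, zero_smul]; exact zero_mem _
end
end St6
namespace St6
section
variable {n l : ℕ}

lemma ite_and_smul {M : Type*} [AddCommMonoid M] [Module ℂ M] (A B : Prop)
    [Decidable A] [Decidable B] (x : M) :
    (if A ∧ B then (1:ℂ) else 0) • x = if A then (if B then x else 0) else 0 := by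
  by_cases hA : A <;> by_cases hB : B <;> simp [hA, hB]

lemma ite_coef {M : Type*} [AddCommMonoid M] [Module ℂ M] (P : Prop) [Decidable P]
    (c : ℂ) (x : M) :
    (if P then c else 0) • x = (if P then (1:ℂ) else 0) • (c • x) := by
  by_cases hP : P <;> simp [hP]

lemma eval_double {α : Type*} [Fintype α] [DecidableEq α] {M : Type*} [AddCommMonoid M]
    [Module ℂ M] (v : ℕ) (c : α) (F : α → Fin l → M) :
    (∑ s : α, ∑ b : Fin l, (if b.val = v ∧ s = c then (1:ℂ) else 0) • F s b)
      = if hv : v < l then F c ⟨v, hv⟩ else 0 := by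
  by_cases hv : v < l
  · rw [dif_pos hv]
    have h1 : ∀ s : α, (∑ b : Fin l, (if b.val = v ∧ s = c then (1:ℂ) else 0) • F s b)
        = if s = c then F s ⟨v, hv⟩ else 0 := by
      intro s
      rw [Finset.sum_congr rfl fun b _ => ite_and_smul (b.val = v) (s = c) (F s b),
        sum_delta_val, dif_pos hv]
    rw [Finset.sum_congr rfl fun s _ => h1 s, sum_delta_fin]
  · rw [dif_neg hv]
    refine Finset.sum_eq_zero fun s _ => Finset.sum_eq_zero fun b _ => ?_
    rw [if_neg (by rintro ⟨h1, h2⟩; have := b.isLt; omega), zero_smul]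

end
end St6
namespace St6
section
variable {n l : ℕ} (h : l ∣ n) (q : Fin (n / l))

lemma eval_double' {M : Type*} [AddCommMonoid M] [Module ℂ M] (v w : ℕ)
    (F : Fin l → Fin l → M) :
    (∑ s : Fin l, ∑ b : Fin l, (if b.val = v ∧ s.val = w then (1:ℂ) else 0) • F s b)
      = if hv : v < l ∧ w < l then F ⟨w, hv.2⟩ ⟨v, hv.1⟩ else 0 := by
  by_cases hv : v < l ∧ w < l
  · rw [dif_pos hv]
    have h1 : ∀ s : Fin l, (∑ b : Fin l, (if b.val = v ∧ s.val = w then (1:ℂ) else 0) • F s b)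
        = if s.val = w then F s ⟨v, hv.1⟩ else 0 := by
      intro s
      rw [Finset.sum_congr rfl fun b _ => ite_and_smul (b.val = v) (s.val = w) (F s b),
        sum_delta_val, dif_pos hv.1]
    rw [Finset.sum_congr rfl fun s _ => h1 s, sum_delta_val, dif_pos hv.2]
  · rw [dif_neg hv]
    refine Finset.sum_eq_zero fun s _ => Finset.sum_eq_zero fun b _ => ?_
    rw [if_neg (by rintro ⟨h1, h2⟩; have := b.isLt; have := s.isLt; omega), zero_smul]

lemma lead_split (t : Bool) (m : ℕ) (p' : Fin (n/l)) (a : Fin l) (hza : a.val ≤ m) :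
    LeadG h q t (m+1) p' a
      = (if hm : m < l then
            (if t then (-1:ℂ)^m else 1) • gen t (bidx h p' a) (bidx h q ⟨m, hm⟩) else 0)
        + (if hc : 1 ≤ a.val ∧ a.val ≤ m then
            LeadG h q t m p' ⟨a.val - 1, by have := a.isLt; omega⟩ else 0) := by
  rw [LeadG, if_neg (by omega)]
  have hterm : ∀ (i' jj : Fin l),
      (if i'.val ≤ a.val ∧ jj.val + a.val + 1 = i'.val + (m+1) then
          (if t then (-1:ℂ)^(i'.val + (m+1) + a.val + 1) else 1) else 0) •
        gen t (bidx h p' i') (bidx h q jj)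
      = (if jj.val = m ∧ i'.val = a.val then (1:ℂ) else 0) •
          ((if t then (-1:ℂ)^(i'.val + (m+1) + a.val + 1) else 1) •
            gen t (bidx h p' i') (bidx h q jj))
        + (if 1 ≤ a.val ∧ i'.val ≤ a.val - 1 ∧ jj.val + (a.val - 1) + 1 = i'.val + m then
            (if t then (-1:ℂ)^(i'.val + (m+1) + a.val + 1) else 1) else 0) •
            gen t (bidx h p' i') (bidx h q jj) := by
    intro i' jj
    rw [← ite_coef]
    rw [← add_smul]
    congr 1
    split_ifs <;> first | ring1 | (exfalso; omega)
  rw [Finset.sum_congr rfl fun i' _ => Finset.sum_congr rfl fun jj _ => hterm i' jj]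
  simp only [Finset.sum_add_distrib]
  congr 1
  · rw [eval_double' m a.val
      (fun i' jj => ((if t then (-1:ℂ)^(i'.val + (m+1) + a.val + 1) else 1) •
        gen t (bidx h p' i') (bidx h q jj)))]
    by_cases hm : m < l
    · rw [dif_pos ⟨hm, a.isLt⟩, dif_pos hm]
      have hcoef : (if t then (-1:ℂ)^(a.val + (m+1) + a.val + 1) else 1)
          = (if t then (-1:ℂ)^m else 1) := by
        cases t
        · rfl
        · show (-1:ℂ)^(a.val + (m+1) + a.val + 1) = (-1)^m
          exact neg_one_pow_congr (by omega)
      rw [Fin.eta, hcoef]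
    · rw [dif_neg (by tauto), dif_neg hm]
  · by_cases hc : 1 ≤ a.val ∧ a.val ≤ m
    · rw [dif_pos hc, LeadG, if_neg (by omega : ¬ (m ≤ a.val - 1))]
      refine Finset.sum_congr rfl fun i' _ => Finset.sum_congr rfl fun jj _ => ?_
      congr 1
      have hiff : (1 ≤ a.val ∧ i'.val ≤ a.val - 1 ∧ jj.val + (a.val - 1) + 1 = i'.val + m)
          ↔ (i'.val ≤ (⟨a.val - 1, by have := a.isLt; omega⟩ : Fin l).val ∧
              jj.val + (⟨a.val - 1, by have := a.isLt; omega⟩ : Fin l).val + 1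
                = i'.val + m) := by
        constructor
        · rintro ⟨h1, h2, h3⟩; exact ⟨h2, h3⟩
        · rintro ⟨h2, h3⟩; exact ⟨hc.1, h2, h3⟩
      have hcoef : (if t then (-1:ℂ)^(i'.val + (m+1) + a.val + 1) else 1)
          = (if t then
              (-1:ℂ)^(i'.val + m + (⟨a.val - 1, by have := a.isLt; omega⟩ : Fin l).val + 1)
            else 1) := by
        cases t
        · rfl
        · show (-1:ℂ)^(i'.val + (m+1) + a.val + 1) = (-1:ℂ)^(i'.val + m + (a.val - 1) + 1)
          exact neg_one_pow_congr (by omega)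
      rw [if_congr hiff hcoef rfl]
    · rw [dif_neg hc]
      refine Finset.sum_eq_zero fun i' _ => Finset.sum_eq_zero fun jj _ => ?_
      rw [if_neg (by rintro ⟨h1, h2, h3⟩; omega), zero_smul]
end
end St6
namespace St6
section
variable {n l : ℕ} (h : l ∣ n) (q : Fin (n / l))

lemma Icore (t : Bool) (m : ℕ) (p' : Fin (n/l)) (a : Fin l) :
    (∑ s : Fin (n/l), ∑ b : Fin l,
        ((if t = false ∧ b.val = m ∧ s = q then (1:ℂ) else 0) •
            Ue (bidx h p' a) (bidx h s b)
          + (if b.val + 1 = a.val ∧ s = p' ∧ b.val < m then (1:ℂ) else 0) •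
              LeadG h q t m s b))
      + (-1:ℂ)^m • (∑ s : Fin (n/l), ∑ b : Fin l,
          (if t = true ∧ b.val = m ∧ s = q then (1:ℂ) else 0) •
            Uf (bidx h p' a) (bidx h s b))
      - LeadG h q t (m+1) p' a ∈ NN h (m+1) a.val := by
  simp only [Finset.sum_add_distrib]
  have hSA : (∑ s : Fin (n/l), ∑ b : Fin l,
        (if t = false ∧ b.val = m ∧ s = q then (1:ℂ) else 0) •
          Ue (bidx h p' a) (bidx h s b))
      = if t = false then
          (if hm : m < l then Ue (bidx h p' a) (bidx h q ⟨m, hm⟩) else 0) else 0 := by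
    by_cases ht : t = false
    · rw [if_pos ht,
        Finset.sum_congr rfl fun s _ => Finset.sum_congr rfl fun b _ =>
          (by rw [if_congr (and_iff_right ht) rfl rfl] :
            (if t = false ∧ b.val = m ∧ s = q then (1:ℂ) else 0) •
              Ue (bidx h p' a) (bidx h s b)
            = (if b.val = m ∧ s = q then (1:ℂ) else 0) • Ue (bidx h p' a) (bidx h s b))]
      exact eval_double m q _
    · rw [if_neg ht]
      refine Finset.sum_eq_zero fun s _ => Finset.sum_eq_zero fun b _ => ?_
      rw [if_neg (fun hh => ht hh.1), zero_smul]
  have hSC2 : (∑ s : Fin (n/l), ∑ b : Fin l,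
        (if t = true ∧ b.val = m ∧ s = q then (1:ℂ) else 0) •
          Uf (bidx h p' a) (bidx h s b))
      = if t = true then
          (if hm : m < l then Uf (bidx h p' a) (bidx h q ⟨m, hm⟩) else 0) else 0 := by
    by_cases ht : t = true
    · rw [if_pos ht,
        Finset.sum_congr rfl fun s _ => Finset.sum_congr rfl fun b _ =>
          (by rw [if_congr (and_iff_right ht) rfl rfl] :
            (if t = true ∧ b.val = m ∧ s = q then (1:ℂ) else 0) •
              Uf (bidx h p' a) (bidx h s b)
            = (if b.val = m ∧ s = q then (1:ℂ) else 0) • Uf (bidx h p' a) (bidx h s b))]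
      exact eval_double m q _
    · rw [if_neg ht]
      refine Finset.sum_eq_zero fun s _ => Finset.sum_eq_zero fun b _ => ?_
      rw [if_neg (fun hh => ht hh.1), zero_smul]
  have hSχ : (∑ s : Fin (n/l), ∑ b : Fin l,
        (if b.val + 1 = a.val ∧ s = p' ∧ b.val < m then (1:ℂ) else 0) • LeadG h q t m s b)
      = if hc : 1 ≤ a.val ∧ a.val ≤ m then
          LeadG h q t m p' ⟨a.val - 1, by have := a.isLt; omega⟩ else 0 := by
    by_cases hc : 1 ≤ a.val ∧ a.val ≤ m
    · rw [dif_pos hc,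
        Finset.sum_congr rfl fun s _ => Finset.sum_congr rfl fun b _ =>
          (by
            refine congrArg (· • LeadG h q t m s b) (if_congr ?_ rfl rfl)
            constructor
            · rintro ⟨h1, h2, h3⟩; exact ⟨by omega, h2⟩
            · rintro ⟨h1, h2⟩; exact ⟨by omega, h2, by omega⟩ :
            (if b.val + 1 = a.val ∧ s = p' ∧ b.val < m then (1:ℂ) else 0) •
              LeadG h q t m s b
            = (if b.val = a.val - 1 ∧ s = p' then (1:ℂ) else 0) • LeadG h q t m s b)]
      rw [eval_double (a.val - 1) p' (fun s b => LeadG h q t m s b),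
        dif_pos (by have := a.isLt; omega : a.val - 1 < l)]
    · rw [dif_neg hc]
      refine Finset.sum_eq_zero fun s _ => Finset.sum_eq_zero fun b _ => ?_
      rw [if_neg (by rintro ⟨h1, h2, h3⟩; omega), zero_smul]
  rw [hSA, hSC2, hSχ]
  rcases le_or_gt (m+1) a.val with hza | hza
  · -- zone A target
    rw [LeadG, if_pos (by omega : m + 1 ≤ a.val),
      dif_neg (by rintro ⟨h1, h2⟩; omega : ¬(1 ≤ a.val ∧ a.val ≤ m)), add_zero]
    have hml : m < l := by have := a.isLt; omega
    cases t
    · rw [if_pos rfl, dif_pos hml, if_neg (by decide), smul_zero, add_zero]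
      rw [show (if (false : Bool) then (0 : UQ n) else
          algebraMap ℂ (UQ n) (if m + 1 = a.val ∧ p' = q then 1 else 0))
          = algebraMap ℂ (UQ n) (if m + 1 = a.val ∧ p' = q then 1 else 0) from rfl]
      have hI := mul_gen_mem h 1 false p' q a ⟨m, hml⟩ (by show m < a.val; omega)
      rw [one_mul] at hI
      have hsc : algebraMap ℂ (UQ n) (if m + 1 = a.val ∧ p' = q then 1 else 0)
          = (if (false : Bool) = false ∧ a.val = (⟨m, hml⟩ : Fin l).val + 1 ∧ p' = q
              then (1:ℂ) else 0) • 1 := by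
        rw [Algebra.algebraMap_eq_smul_one]
        congr 1
        refine if_congr ?_ rfl rfl
        constructor
        · rintro ⟨h1, h2⟩
          refine ⟨rfl, ?_, h2⟩
          show a.val = m + 1
          omega
        · rintro ⟨h1, h2, h3⟩
          have h2' : a.val = m + 1 := h2
          exact ⟨by omega, h3⟩
      rw [hsc]
      exact Submodule.mem_sup_left hI
    · rw [if_neg (by decide), if_pos rfl, dif_pos hml, zero_add,
        show (if (true : Bool) then (0 : UQ n) else
          algebraMap ℂ (UQ n) (if m + 1 = a.val ∧ p' = q then 1 else 0)) = 0 from rfl,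
        sub_zero]
      refine Submodule.smul_mem _ _ (Submodule.mem_sup_left ?_)
      have hI := mul_gen_mem h 1 true p' q a ⟨m, hml⟩ (by show m < a.val; omega)
      rw [one_mul, if_neg (by rintro ⟨h1, h2⟩; exact absurd h1 (by decide)), zero_smul,
        sub_zero] at hI
      exact hI
  · -- zone B target
    have hls := lead_split h q t m p' a (by omega)
    rw [hls]
    have h12 : (if t = false then
          (if hm : m < l then Ue (bidx h p' a) (bidx h q ⟨m, hm⟩) else 0) else 0)
        + (-1:ℂ)^m • (if t = true then
            (if hm : m < l then Uf (bidx h p' a) (bidx h q ⟨m, hm⟩) else 0) else 0)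
        = (if hm : m < l then
            (if t then (-1:ℂ)^m else 1) • gen t (bidx h p' a) (bidx h q ⟨m, hm⟩) else 0) := by
      cases t
      · by_cases hm : m < l
        · rw [if_pos rfl, if_neg (by decide), dif_pos hm, dif_pos hm, smul_zero, add_zero,
            show (if (false : Bool) then (-1:ℂ)^m else 1) = 1 from rfl, one_smul]
          rfl
        · rw [if_pos rfl, if_neg (by decide), dif_neg hm, dif_neg hm, smul_zero, add_zero]
      · by_cases hm : m < l
        · rw [if_neg (by decide), if_pos rfl, dif_pos hm, dif_pos hm, zero_add,
            show (if (true : Bool) then (-1:ℂ)^m else 1) = (-1:ℂ)^m from rfl]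
          rfl
        · rw [if_neg (by decide), if_pos rfl, dif_neg hm, dif_neg hm, smul_zero, add_zero]
    rw [← h12]
    have : ∀ X1 X2 X3 : UQ n, (X1 + X2) + X3 - ((X1 + X3) + X2) = 0 := fun X1 X2 X3 => by abel
    rw [this]
    exact zero_mem _
end
end St6
namespace St6
section
variable {n l : ℕ} (h : l ∣ n) (q : Fin (n / l))

lemma claimC (hl : 0 < l) : ∀ (m : ℕ) (t : Bool) (p' : Fin (n/l)) (a : Fin l),
    gU t m (bidx h p' a) (bidx h q ⟨0, hl⟩) - LeadG h q t m p' a ∈ NN h m a.val := by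
  intro m
  induction m with
  | zero =>
    intro t p' a
    rw [LeadG, if_pos (Nat.zero_le _)]
    cases t
    · rw [show gU false 0 (bidx h p' a) (bidx h q ⟨0, hl⟩)
          = algebraMap ℂ (UQ n) (kd (bidx h p' a) (bidx h q ⟨0, hl⟩)) from rfl,
        show (if (false : Bool) then (0 : UQ n) else
          algebraMap ℂ (UQ n) (if 0 = a.val ∧ p' = q then 1 else 0))
          = algebraMap ℂ (UQ n) (if 0 = a.val ∧ p' = q then 1 else 0) from rfl]
      have hkd : kd (bidx h p' a) (bidx h q ⟨0, hl⟩)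
          = (if 0 = a.val ∧ p' = q then (1:ℂ) else 0) := by
        rw [kd]
        refine if_congr ?_ rfl rfl
        rw [bidx_inj h]
        constructor
        · rintro ⟨h1, h2⟩; exact ⟨(congrArg Fin.val h2).symm, h1⟩
        · rintro ⟨h1, h2⟩; exact ⟨h2, Fin.ext h1.symm⟩
      rw [hkd, sub_self]
      exact zero_mem _
    · rw [show gU true 0 (bidx h p' a) (bidx h q ⟨0, hl⟩) = (0 : UQ n) from rfl,
        show (if (true : Bool) then (0 : UQ n) else
          algebraMap ℂ (UQ n) (if 0 = a.val ∧ p' = q then 1 else 0)) = 0 from rfl,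
        sub_zero]
      exact zero_mem _
  | succ m ih =>
    intro t p' a
    rw [gU_succ,
      sum_blocks h (fun k => Ue (bidx h p' a) k * gU t m k (bidx h q ⟨0, hl⟩)),
      sum_blocks h (fun k => Uf (bidx h p' a) k * gU (!t) m k (bidx h q ⟨0, hl⟩))]
    have hS1 : (∑ s : Fin (n/l), ∑ b : Fin l,
          Ue (bidx h p' a) (bidx h s b) * gU t m (bidx h s b) (bidx h q ⟨0, hl⟩))
        = (∑ s : Fin (n/l), ∑ b : Fin l, Ue (bidx h p' a) (bidx h s b) *
              (gU t m (bidx h s b) (bidx h q ⟨0, hl⟩) - LeadG h q t m s b))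
          + ((∑ s : Fin (n/l), ∑ b : Fin l,
              (Ue (bidx h p' a) (bidx h s b) * LeadG h q t m s b
              - ((if t = false ∧ b.val = m ∧ s = q then (1:ℂ) else 0) •
                    Ue (bidx h p' a) (bidx h s b)
                 + (if b.val + 1 = a.val ∧ s = p' ∧ b.val < m then (1:ℂ) else 0) •
                    LeadG h q t m s b)))
          + (∑ s : Fin (n/l), ∑ b : Fin l,
              ((if t = false ∧ b.val = m ∧ s = q then (1:ℂ) else 0) •
                    Ue (bidx h p' a) (bidx h s b)
                 + (if b.val + 1 = a.val ∧ s = p' ∧ b.val < m then (1:ℂ) else 0) •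
                    LeadG h q t m s b))) := by
      rw [← Finset.sum_add_distrib, ← Finset.sum_add_distrib]
      refine Finset.sum_congr rfl fun s _ => ?_
      rw [← Finset.sum_add_distrib, ← Finset.sum_add_distrib]
      refine Finset.sum_congr rfl fun b _ => ?_
      rw [mul_sub]
      abel
    have hS2 : (∑ s : Fin (n/l), ∑ b : Fin l,
          Uf (bidx h p' a) (bidx h s b) * gU (!t) m (bidx h s b) (bidx h q ⟨0, hl⟩))
        = (∑ s : Fin (n/l), ∑ b : Fin l, Uf (bidx h p' a) (bidx h s b) *
              (gU (!t) m (bidx h s b) (bidx h q ⟨0, hl⟩) - LeadG h q (!t) m s b))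
          + ((∑ s : Fin (n/l), ∑ b : Fin l,
              (Uf (bidx h p' a) (bidx h s b) * LeadG h q (!t) m s b
              - (if t = true ∧ b.val = m ∧ s = q then (1:ℂ) else 0) •
                    Uf (bidx h p' a) (bidx h s b)))
          + (∑ s : Fin (n/l), ∑ b : Fin l,
              (if t = true ∧ b.val = m ∧ s = q then (1:ℂ) else 0) •
                    Uf (bidx h p' a) (bidx h s b))) := by
      rw [← Finset.sum_add_distrib, ← Finset.sum_add_distrib]
      refine Finset.sum_congr rfl fun s _ => ?_
      rw [← Finset.sum_add_distrib, ← Finset.sum_add_distrib]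
      refine Finset.sum_congr rfl fun b _ => ?_
      rw [mul_sub]
      abel
    rw [hS1, hS2]
    have hm1 : (∑ s : Fin (n/l), ∑ b : Fin l, Ue (bidx h p' a) (bidx h s b) *
          (gU t m (bidx h s b) (bidx h q ⟨0, hl⟩) - LeadG h q t m s b))
        ∈ NN h (m+1) a.val :=
      Submodule.sum_mem _ fun s _ => Submodule.sum_mem _ fun b _ =>
        errpush h false p' s a b m (ih t s b)
    have hm3 : (∑ s : Fin (n/l), ∑ b : Fin l, Uf (bidx h p' a) (bidx h s b) *
          (gU (!t) m (bidx h s b) (bidx h q ⟨0, hl⟩) - LeadG h q (!t) m s b))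
        ∈ NN h (m+1) a.val :=
      Submodule.sum_mem _ fun s _ => Submodule.sum_mem _ fun b _ =>
        errpush h true p' s a b m (ih (!t) s b)
    have hm2 := Submodule.sum_mem (NN h (m+1) a.val)
      (fun s (_ : s ∈ Finset.univ) => Submodule.sum_mem _
        (fun b (_ : b ∈ Finset.univ) => M1core h q t m p' s a b))
    have hm4 := Submodule.sum_mem (NN h (m+1) a.val)
      (fun s (_ : s ∈ Finset.univ) => Submodule.sum_mem _
        (fun b (_ : b ∈ Finset.univ) => M2core h q t m p' s a b))
    have hI := Icore h q t m p' a
    have heq : ∀ A1 A2 A3 B1 B2 B3 L : UQ n,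
        (A1 + (A2 + A3)) + (-1:ℂ)^m • (B1 + (B2 + B3)) - L
          = (A1 + A2) + ((-1:ℂ)^m • (B1 + B2)) + ((A3 + (-1:ℂ)^m • B3) - L) := by
      intros; module
    rw [heq]
    refine add_mem (add_mem (add_mem hm1 hm2) (Submodule.smul_mem _ _ (add_mem hm3 hm4))) hI
end
end St6
namespace St6
section
variable {n l : ℕ} (h : l ∣ n) (q : Fin (n / l))

lemma lead_final_e (hl : 0 < l) (k : ℕ) (hk : k ≤ l - 1) (p : Fin (n/l)) :
    LeadG h q false (l + k) p ⟨l - 1, by have := h; omega⟩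
      = ∑ i : Fin (l - k),
          Ue (bidx h p ⟨i.val, (by have := i.isLt; omega : i.val + 0 < l)⟩)
             (bidx h q ⟨i.val + k, (by have := i.isLt; omega : i.val + k + 0 < l)⟩) := by
  classical
  set F : ℕ → UQ n := fun i =>
    if hi : i + k < l then Ue (bidx h p ⟨i, by omega⟩) (bidx h q ⟨i + k, hi⟩) else 0 with hF
  rw [LeadG, if_neg ((by omega : ¬(l + k ≤ l - 1)) :
    ¬(l + k ≤ (⟨l - 1, by omega⟩ : Fin l).val))]
  have hterm : ∀ i' : Fin l, (∑ jj : Fin l,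
      (if i'.val ≤ (⟨l - 1, by omega⟩ : Fin l).val ∧
          jj.val + (⟨l - 1, by omega⟩ : Fin l).val + 1 = i'.val + (l + k) then
        (if (false : Bool) then (-1:ℂ)^(i'.val + (l + k) + (⟨l - 1, by omega⟩ : Fin l).val + 1)
          else 1) else 0) •
        gen false (bidx h p i') (bidx h q jj)) = F i'.val := by
    intro i'
    have h1 : ∀ jj : Fin l,
        (if i'.val ≤ (⟨l - 1, by omega⟩ : Fin l).val ∧
            jj.val + (⟨l - 1, by omega⟩ : Fin l).val + 1 = i'.val + (l + k) then
          (if (false : Bool) then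
            (-1:ℂ)^(i'.val + (l + k) + (⟨l - 1, by omega⟩ : Fin l).val + 1) else 1) else 0) •
          gen false (bidx h p i') (bidx h q jj)
        = if jj.val = i'.val + k then Ue (bidx h p i') (bidx h q jj) else 0 := by
      intro jj
      by_cases hc : jj.val = i'.val + k
      · rw [if_pos ⟨(by have := i'.isLt; show i'.val ≤ l - 1; omega :
            i'.val ≤ (⟨l - 1, by omega⟩ : Fin l).val),
            (by show jj.val + (l - 1) + 1 = i'.val + (l + k); omega :
              jj.val + (⟨l - 1, by omega⟩ : Fin l).val + 1 = i'.val + (l + k))⟩, if_pos hc]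
        rw [show (if (false : Bool) then
            (-1:ℂ)^(i'.val + (l + k) + (⟨l - 1, by omega⟩ : Fin l).val + 1) else 1) = 1
          from rfl, one_smul]
        rfl
      · rw [if_neg (by
          rintro ⟨h1, h2⟩
          have h2' : jj.val + (l - 1) + 1 = i'.val + (l + k) := h2
          have := i'.isLt
          omega), if_neg hc, zero_smul]
    rw [Finset.sum_congr rfl fun jj _ => h1 jj, sum_delta_val]
  rw [Finset.sum_congr rfl fun i' _ => hterm i']
  have hL : (∑ i' : Fin l, F i'.val) = ∑ i ∈ Finset.range l, F i :=
    Fin.sum_univ_eq_sum_range F l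
  have hR : (∑ i : Fin (l - k),
        Ue (bidx h p ⟨i.val, by have := i.isLt; omega⟩)
           (bidx h q ⟨i.val + k, by have := i.isLt; omega⟩))
      = ∑ i ∈ Finset.range (l - k), F i := by
    rw [← Fin.sum_univ_eq_sum_range F (l - k)]
    refine Finset.sum_congr rfl fun i _ => ?_
    have hi : i.val + k < l := by have := i.isLt; omega
    have h2 : F i.val
        = Ue (bidx h p ⟨i.val, by omega⟩) (bidx h q ⟨i.val + k, hi⟩) := dif_pos hi
    exact h2.symm
  rw [hL, hR]
  refine (Finset.sum_subset (Finset.range_subset_range.2 (by omega)) fun x hx hnx => ?_).symm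
  have h2 : F x = 0 := dif_neg (by simp only [Finset.mem_range] at hx hnx; omega)
  exact h2

lemma lead_final_f (hl : 0 < l) (k : ℕ) (hk : k ≤ l - 1) (p : Fin (n/l)) :
    LeadG h q true (l + k) p ⟨l - 1, by have := h; omega⟩
      = ∑ i : Fin (l - k),
          ((-1:ℂ)^(i.val + k)) •
            Uf (bidx h p ⟨i.val, (by have := i.isLt; omega : i.val + 0 < l)⟩)
               (bidx h q ⟨i.val + k, (by have := i.isLt; omega : i.val + k + 0 < l)⟩) := by
  classical
  set F : ℕ → UQ n := fun i =>
    if hi : i + k < l then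
      ((-1:ℂ)^(i + k)) • Uf (bidx h p ⟨i, by omega⟩) (bidx h q ⟨i + k, hi⟩) else 0 with hF
  rw [LeadG, if_neg ((by omega : ¬(l + k ≤ l - 1)) :
    ¬(l + k ≤ (⟨l - 1, by omega⟩ : Fin l).val))]
  have hterm : ∀ i' : Fin l, (∑ jj : Fin l,
      (if i'.val ≤ (⟨l - 1, by omega⟩ : Fin l).val ∧
          jj.val + (⟨l - 1, by omega⟩ : Fin l).val + 1 = i'.val + (l + k) then
        (if (true : Bool) then
          (-1:ℂ)^(i'.val + (l + k) + (⟨l - 1, by omega⟩ : Fin l).val + 1) else 1) else 0) •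
        gen true (bidx h p i') (bidx h q jj)) = F i'.val := by
    intro i'
    have h1 : ∀ jj : Fin l,
        (if i'.val ≤ (⟨l - 1, by omega⟩ : Fin l).val ∧
            jj.val + (⟨l - 1, by omega⟩ : Fin l).val + 1 = i'.val + (l + k) then
          (if (true : Bool) then
            (-1:ℂ)^(i'.val + (l + k) + (⟨l - 1, by omega⟩ : Fin l).val + 1) else 1) else 0) •
          gen true (bidx h p i') (bidx h q jj)
        = if jj.val = i'.val + k then
            ((-1:ℂ)^(i'.val + k)) • Uf (bidx h p i') (bidx h q jj) else 0 := by
      intro jj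
      by_cases hc : jj.val = i'.val + k
      · rw [if_pos ⟨(by have := i'.isLt; show i'.val ≤ l - 1; omega :
            i'.val ≤ (⟨l - 1, by omega⟩ : Fin l).val),
            (by show jj.val + (l - 1) + 1 = i'.val + (l + k); omega :
              jj.val + (⟨l - 1, by omega⟩ : Fin l).val + 1 = i'.val + (l + k))⟩, if_pos hc]
        rw [show (if (true : Bool) then
            (-1:ℂ)^(i'.val + (l + k) + (⟨l - 1, by omega⟩ : Fin l).val + 1) else 1)
            = (-1:ℂ)^(i'.val + (l + k) + (l - 1) + 1) from rfl]
        rw [neg_one_pow_congr (by omega : (i'.val + (l + k) + (l - 1) + 1) % 2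
            = (i'.val + k) % 2)]
        rfl
      · rw [if_neg (by
          rintro ⟨h1, h2⟩
          have h2' : jj.val + (l - 1) + 1 = i'.val + (l + k) := h2
          have := i'.isLt
          omega), if_neg hc, zero_smul]
    rw [Finset.sum_congr rfl fun jj _ => h1 jj, sum_delta_val]
  rw [Finset.sum_congr rfl fun i' _ => hterm i']
  have hL : (∑ i' : Fin l, F i'.val) = ∑ i ∈ Finset.range l, F i :=
    Fin.sum_univ_eq_sum_range F l
  have hR : (∑ i : Fin (l - k),
        ((-1:ℂ)^(i.val + k)) •
          Uf (bidx h p ⟨i.val, by have := i.isLt; omega⟩)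
             (bidx h q ⟨i.val + k, by have := i.isLt; omega⟩))
      = ∑ i ∈ Finset.range (l - k), F i := by
    rw [← Fin.sum_univ_eq_sum_range F (l - k)]
    refine Finset.sum_congr rfl fun i _ => ?_
    have hi : i.val + k < l := by have := i.isLt; omega
    have h2 : F i.val = ((-1:ℂ)^(i.val + k)) •
        Uf (bidx h p ⟨i.val, by omega⟩) (bidx h q ⟨i.val + k, hi⟩) := dif_pos hi
    exact h2.symm
  rw [hL, hR]
  refine (Finset.sum_subset (Finset.range_subset_range.2 (by omega)) fun x hx hnx => ?_).symm
  have h2 : F x = 0 := dif_neg (by simp only [Finset.mem_range] at hx hnx; omega)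
  exact h2

end
end St6

/-- Let `l ∣ n`, `1 ≤ p,q ≤ n/l` and `0 ≤ k ≤ l-1`.  Then
`P(π(e^{(l+k)}_{lp, l(q-1)+1})) = Σ_{i=1}^{l-k} e_{l(p-1)+i, l(q-1)+i+k}` and
`P(π(f^{(l+k)}_{lp, l(q-1)+1})) = Σ_{i=1}^{l-k} (-1)^{i+k-1} f_{l(p-1)+i, l(q-1)+i+k}`,
i.e. modulo `I_χ`, `π(e^{(l+k)}_{lp, l(q-1)+1})` equals the image of the displayed element
of `g^χ` (which has Kazhdan degree `2k+2` and weight `2k`) plus the image of a linear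
combination of monomials in the generators of `U(p)` of strictly smaller Kazhdan degree,
or of Kazhdan degree `≤ 2k+2` and weight `< 2k`. -/
theorem statement6 (n l : ℕ) (hl : 0 < l) (h : l ∣ n) (p q : Fin (n / l))
    (k : ℕ) (hk : k ≤ l - 1) :
    (∃ c ∈ LowSpan n l h (2 * k + 2) (2 * k),
      piq n l h (eU (l + k) (bidx h p ⟨l - 1, by omega⟩) (bidx h q ⟨0, hl⟩)) =
        piq n l h
          ((∑ i : Fin (l - k),
              Ue (bidx h p ⟨i.val, by have := i.isLt; omega⟩)
                 (bidx h q ⟨i.val + k, by have := i.isLt; omega⟩)) + c)) ∧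
    (∃ c ∈ LowSpan n l h (2 * k + 2) (2 * k),
      piq n l h (fU (l + k) (bidx h p ⟨l - 1, by omega⟩) (bidx h q ⟨0, hl⟩)) =
        piq n l h
          ((∑ i : Fin (l - k),
              ((-1 : ℂ) ^ (i.val + k)) •
                Uf (bidx h p ⟨i.val, by have := i.isLt; omega⟩)
                   (bidx h q ⟨i.val + k, by have := i.isLt; omega⟩)) + c)) := by
  have ha : l - 1 < l := by omega
  have hsub : St6.ErrSet h (l + k) ((⟨l - 1, ha⟩ : Fin l)).val
      ⊆ LowSet n l h (2 * k + 2) (2 * k) := by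
    rintro x ⟨L, hw, rfl, hcond⟩
    refine ⟨L, hw, rfl, ?_⟩
    have hd : St6.degL L = (L.map pgDeg).sum := rfl
    have hwt : St6.wtL L = (L.map pgWt).sum := rfl
    have hav : ((⟨l - 1, ha⟩ : Fin l)).val = l - 1 := rfl
    rw [hav] at hcond
    omega
  constructor
  · have hx : St6.gU false (l + k) (bidx h p ⟨l - 1, by omega⟩) (bidx h q ⟨0, hl⟩)
        - St6.LeadG h q false (l + k) p ⟨l - 1, by omega⟩
        ∈ St6.IchiC h ⊔ St6.Err h (l + k) ((⟨l - 1, ha⟩ : Fin l)).val :=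
      St6.claimC h q hl (l + k) false p ⟨l - 1, by omega⟩
    obtain ⟨y, hy, c, hc, hsum⟩ := Submodule.mem_sup.1 hx
    refine ⟨c, Submodule.span_mono hsub hc, ?_⟩
    rw [piq, Submodule.mkQ_apply, Submodule.mkQ_apply, Submodule.Quotient.eq]
    have hLe := St6.lead_final_e h q hl k hk p
    have hfinal : eU (l + k) (bidx h p ⟨l - 1, by omega⟩) (bidx h q ⟨0, hl⟩)
        - ((∑ i : Fin (l - k),
              Ue (bidx h p ⟨i.val, by have := i.isLt; omega⟩)
                 (bidx h q ⟨i.val + k, by have := i.isLt; omega⟩)) + c) = y := by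
      rw [show eU (l + k) (bidx h p ⟨l - 1, by omega⟩) (bidx h q ⟨0, hl⟩)
          = St6.gU false (l + k) (bidx h p ⟨l - 1, by omega⟩) (bidx h q ⟨0, hl⟩) from rfl,
        ← hLe]
      have h2 : St6.gU false (l + k) (bidx h p ⟨l - 1, by omega⟩) (bidx h q ⟨0, hl⟩)
          - (St6.LeadG h q false (l + k) p ⟨l - 1, by omega⟩ + c)
          = (St6.gU false (l + k) (bidx h p ⟨l - 1, by omega⟩) (bidx h q ⟨0, hl⟩)
              - St6.LeadG h q false (l + k) p ⟨l - 1, by omega⟩) - c := by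
        abel
      rw [h2, ← hsum]
      abel
    rw [hfinal]
    exact hy
  · have hx : St6.gU true (l + k) (bidx h p ⟨l - 1, by omega⟩) (bidx h q ⟨0, hl⟩)
        - St6.LeadG h q true (l + k) p ⟨l - 1, by omega⟩
        ∈ St6.IchiC h ⊔ St6.Err h (l + k) ((⟨l - 1, ha⟩ : Fin l)).val :=
      St6.claimC h q hl (l + k) true p ⟨l - 1, by omega⟩
    obtain ⟨y, hy, c, hc, hsum⟩ := Submodule.mem_sup.1 hx
    refine ⟨c, Submodule.span_mono hsub hc, ?_⟩
    rw [piq, Submodule.mkQ_apply, Submodule.mkQ_apply, Submodule.Quotient.eq]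
    have hLe := St6.lead_final_f h q hl k hk p
    have hfinal : fU (l + k) (bidx h p ⟨l - 1, by omega⟩) (bidx h q ⟨0, hl⟩)
        - ((∑ i : Fin (l - k),
              ((-1 : ℂ) ^ (i.val + k)) •
                Uf (bidx h p ⟨i.val, by have := i.isLt; omega⟩)
                   (bidx h q ⟨i.val + k, by have := i.isLt; omega⟩)) + c) = y := by
      rw [show fU (l + k) (bidx h p ⟨l - 1, by omega⟩) (bidx h q ⟨0, hl⟩)
          = St6.gU true (l + k) (bidx h p ⟨l - 1, by omega⟩) (bidx h q ⟨0, hl⟩) from rfl,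
        ← hLe]
      have h2 : St6.gU true (l + k) (bidx h p ⟨l - 1, by omega⟩) (bidx h q ⟨0, hl⟩)
          - (St6.LeadG h q true (l + k) p ⟨l - 1, by omega⟩ + c)
          = (St6.gU true (l + k) (bidx h p ⟨l - 1, by omega⟩) (bidx h q ⟨0, hl⟩)
              - St6.LeadG h q true (l + k) p ⟨l - 1, by omega⟩) - c := by
        abel
      rw [h2, ← hsum]
      abel
    rw [hfinal]
    exact hy
end
end
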